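/- arXiv:1210.2145 — 9 statements merged into one kernel-verified Lean document; each statement's English description precedes it below -/
import Mathlib

section
/- Reshetnyak's inequality: for any four points x, y, u, v in a Hadamard space (H,d) one has d(x,y)² + d(u,v)² ≤ d(x,v)² + d(y,u)² + 2·d(x,u)·d(y,v). -/
/-!
Put `a = d(x,u)`, `b = d(y,v)` and let `m` be the point of the geodesic `[u,v]` at parameter
`t = a/(a+b)`. The CAT(0) inequality bounds `d(x,m)²` and `d(y,m)²`; combining them through
`d(x,y)² ≤ (d(x,m) + d(m,y))² ≤ d(x,m)²/t + d(y,m)²/(1-t)` the `d(u,v)²` terms cancel and the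
remaining error terms are `(1-t)/t · a² + t/(1-t) · b² = 2ab`.
-/

/-- A Hadamard space structure on a metric space `H`: a geodesic combination map
`geo x y t = (1-t)x ⊕ ty` satisfying the geodesic axioms and the CAT(0) inequality.
(Completeness is imposed via the `CompleteSpace` instance in the theorems.) -/
structure Hadamard (H : Type*) [MetricSpace H] : Type _ where
  geo : H → H → ℝ → H
  geo_zero : ∀ x y : H, geo x y 0 = x
  geo_one : ∀ x y : H, geo x y 1 = y
  geo_dist : ∀ x y : H, ∀ s ∈ Set.Icc (0 : ℝ) 1, ∀ t ∈ Set.Icc (0 : ℝ) 1,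
    dist (geo x y s) (geo x y t) = |s - t| * dist x y
  cat0 : ∀ z x y : H, ∀ t ∈ Set.Icc (0 : ℝ) 1,
    dist z (geo x y t) ^ 2
      ≤ (1 - t) * dist z x ^ 2 + t * dist z y ^ 2 - t * (1 - t) * dist x y ^ 2

lemma add_sq_le_sq_div_add_sq_div_one_sub {p q t : ℝ} (ht₀ : 0 < t) (ht₁ : t < 1) :
    (p + q) ^ 2 ≤ p ^ 2 / t + q ^ 2 / (1 - t) := by
  have hs : 0 < 1 - t := sub_pos.mpr ht₁
  -- the difference is `(p(1-t) - qt)² / (t(1-t))`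
  rw [div_add_div _ _ ht₀.ne' hs.ne', le_div_iff₀ (mul_pos ht₀ hs)]
  nlinarith [sq_nonneg (p * (1 - t) - q * t)]

namespace Hadamard

variable {H : Type*} [MetricSpace H]

lemma dist_sq_add_dist_sq_le_weighted (G : Hadamard H) (x y u v : H) {t : ℝ} (ht₀ : 0 < t)
    (ht₁ : t < 1) :
    dist x y ^ 2 + dist u v ^ 2 ≤ dist x v ^ 2 + dist y u ^ 2
      + (1 - t) / t * dist x u ^ 2 + t / (1 - t) * dist y v ^ 2 := by
  have hs : 0 < 1 - t := sub_pos.mpr ht₁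
  have ht : t ∈ Set.Icc (0 : ℝ) 1 := ⟨ht₀.le, ht₁.le⟩
  set m := G.geo u v t
  have hx := G.cat0 x u v t ht
  have hy := G.cat0 y u v t ht
  have hxy : dist x y ^ 2 ≤ dist x m ^ 2 / t + dist y m ^ 2 / (1 - t) :=
    calc dist x y ^ 2 ≤ (dist x m + dist y m) ^ 2 := by
          gcongr
          exact dist_triangle_right x y m
      _ ≤ _ := add_sq_le_sq_div_add_sq_div_one_sub ht₀ ht₁
  have hx' : dist x m ^ 2 / t ≤ (1 - t) / t * dist x u ^ 2 + dist x v ^ 2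
      - (1 - t) * dist u v ^ 2 := by
    rw [div_le_iff₀ ht₀]
    exact hx.trans_eq (by field_simp)
  have hy' : dist y m ^ 2 / (1 - t) ≤ dist y u ^ 2 + t / (1 - t) * dist y v ^ 2
      - t * dist u v ^ 2 := by
    rw [div_le_iff₀ hs]
    exact hy.trans_eq (by field_simp)
  linarith

end Hadamard

theorem reshetnyak_inequality_general {H : Type*} [MetricSpace H]
    (G : Hadamard H) (x y u v : H) :
    dist x y ^ 2 + dist u v ^ 2
      ≤ dist x v ^ 2 + dist y u ^ 2 + 2 * dist x u * dist y v := by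
  rcases (dist_nonneg (x := x) (y := u)).eq_or_lt with hxu | hxu
  · obtain rfl : x = u := dist_eq_zero.mp hxu.symm
    rw [dist_self, dist_comm y x]
    linarith
  rcases (dist_nonneg (x := y) (y := v)).eq_or_lt with hyv | hyv
  · obtain rfl : y = v := dist_eq_zero.mp hyv.symm
    rw [dist_self, dist_comm u y]
    linarith
  set a := dist x u
  set b := dist y v
  have hab : 0 < a + b := add_pos hxu hyv
  have h := G.dist_sq_add_dist_sq_le_weighted x y u v (t := a / (a + b))
    (div_pos hxu hab) ((div_lt_one hab).mpr (lt_add_of_pos_right a hyv))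
  -- with `t = a/(a+b)` the weights are `(1-t)/t = b/a` and `t/(1-t) = a/b`
  have hweights : (1 - a / (a + b)) / (a / (a + b)) * a ^ 2
      + a / (a + b) / (1 - a / (a + b)) * b ^ 2 = 2 * a * b := by
    have h1t : 1 - a / (a + b) = b / (a + b) := by field_simp; ring
    rw [h1t, div_div_div_cancel_right₀ hab.ne', div_div_div_cancel_right₀ hab.ne']
    field_simp
    ring
  linarith

/-- Reshetnyak's inequality in a Hadamard space. -/
theorem reshetnyak_inequality {H : Type*} [MetricSpace H] [CompleteSpace H]
    (G : Hadamard H) (x y u v : H) :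
    dist x y ^ 2 + dist u v ^ 2
      ≤ dist x v ^ 2 + dist y u ^ 2 + 2 * dist x u * dist y v :=
  reshetnyak_inequality_general G x y u v
end

section
/- If (Cₙ)ₙ∈ℕ is a nonincreasing sequence of nonempty bounded closed convex subsets of a Hadamard space (H,d), then the intersection ⋂ₙ∈ℕ Cₙ is nonempty. -/
open Filter Topology

/-- A function `f : H → (-∞,∞]` is (geodesically) convex if along every geodesic
`t ↦ (1-t)x ⊕ ty` it satisfies the convexity inequality. -/
def GeoConvex {H : Type*} [MetricSpace H] (G : Hadamard H) (f : H → EReal) : Prop :=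
  ∀ x y : H, ∀ t ∈ Set.Icc (0 : ℝ) 1,
    f (G.geo x y t) ≤ ((1 - t : ℝ) : EReal) * f x + ((t : ℝ) : EReal) * f y

/-- A set `C ⊆ H` is convex if it contains the geodesic between any two of its points. -/
def GeoConvexSet {H : Type*} [MetricSpace H] (G : Hadamard H) (C : Set H) : Prop :=
  ∀ x ∈ C, ∀ y ∈ C, ∀ t ∈ Set.Icc (0 : ℝ) 1, G.geo x y t ∈ C

/-- A nonincreasing sequence of nonempty bounded closed convex subsets of a Hadamard
space has nonempty intersection. -/
theorem nested_bounded_closed_convex_inter_nonempty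
    {H : Type*} [MetricSpace H] [CompleteSpace H] (G : Hadamard H)
    (C : ℕ → Set H) (hdec : ∀ n : ℕ, C (n + 1) ⊆ C n)
    (hne : ∀ n : ℕ, (C n).Nonempty)
    (hbdd : ∀ n : ℕ, Bornology.IsBounded (C n))
    (hcl : ∀ n : ℕ, IsClosed (C n))
    (hconv : ∀ n : ℕ, GeoConvexSet G (C n)) :
    (⋂ n : ℕ, C n).Nonempty := by
  obtain ⟨p, hp⟩ := hne 0
  have hanti : Antitone C := antitone_nat_of_succ_le hdec
  set d : ℕ → ℝ := fun n => Metric.infDist p (C n) with hd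
  -- d is monotone
  have hdmono : Monotone d := fun n m hnm =>
    Metric.infDist_le_infDist_of_subset (hanti hnm) (hne m)
  -- d is bounded above
  obtain ⟨R, hR⟩ := (hbdd 0).subset_closedBall p
  have hdbdd : BddAbove (Set.range d) := by
    refine ⟨R, ?_⟩
    rintro _ ⟨n, rfl⟩
    obtain ⟨y, hy⟩ := hne n
    have hy0 : y ∈ C 0 := hanti (Nat.zero_le n) hy
    have := hR hy0
    simp only [Metric.mem_closedBall] at this
    calc d n ≤ dist p y := Metric.infDist_le_dist_of_mem hy
      _ = dist y p := dist_comm _ _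
      _ ≤ R := this
  set L : ℝ := ⨆ n, d n with hLdef
  have hL : Tendsto d atTop (𝓝 L) := tendsto_atTop_ciSup hdmono hdbdd
  have hdL : ∀ n, d n ≤ L := fun n => le_ciSup hdbdd n
  have hd0 : ∀ n, 0 ≤ d n := fun n => Metric.infDist_nonneg
  -- auxiliary sequence u
  set u : ℕ → ℝ := fun n => 1 / (n + 1 : ℝ) with hu
  have hupos : ∀ n, 0 < u n := fun n => by positivity
  have humono : ∀ {n m : ℕ}, n ≤ m → u m ≤ u n := by
    intro n m h
    have : (n : ℝ) + 1 ≤ (m : ℝ) + 1 := by exact_mod_cast Nat.succ_le_succ h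
    exact one_div_le_one_div_of_le (by positivity) this
  -- choose approximate minimizers
  have hx : ∀ n, ∃ x ∈ C n, dist p x < d n + u n := by
    intro n
    exact (Metric.infDist_lt_iff (hne n)).mp (by linarith [hupos n])
  choose x hxmem hxdist using hx
  -- key estimate
  have key : ∀ n m N : ℕ, N ≤ n → N ≤ m →
      dist (x n) (x m) ^ 2 ≤ 4 * (L + u N) ^ 2 - 4 * d N ^ 2 := by
    intro n m N hNn hNm
    have hxnN : x n ∈ C N := hanti hNn (hxmem n)
    have hxmN : x m ∈ C N := hanti hNm (hxmem m)
    have hmid := hconv N (x n) hxnN (x m) hxmN (1/2) ⟨by norm_num, by norm_num⟩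
    have hcat := G.cat0 p (x n) (x m) (1/2) ⟨by norm_num, by norm_num⟩
    have hdN : d N ≤ dist p (G.geo (x n) (x m) (1/2)) :=
      Metric.infDist_le_dist_of_mem hmid
    have h1 : dist p (x n) ≤ L + u N := by
      have := hxdist n
      have := hdL n
      have := humono hNn
      linarith
    have h2 : dist p (x m) ≤ L + u N := by
      have := hxdist m
      have := hdL m
      have := humono hNm
      linarith
    have hdN2 : d N ^ 2 ≤ dist p (G.geo (x n) (x m) (1/2)) ^ 2 :=
      pow_le_pow_left₀ (hd0 N) hdN 2
    nlinarith [dist_nonneg (x := p) (y := x n), dist_nonneg (x := p) (y := x m),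
      hupos N, hdL N]
  -- Cauchy
  set b : ℕ → ℝ := fun N => Real.sqrt (4 * (L + u N) ^ 2 - 4 * d N ^ 2) with hb
  have hcauchy : CauchySeq x := by
    apply cauchySeq_of_le_tendsto_0 b
    · intro n m N hNn hNm
      have := key n m N hNn hNm
      calc dist (x n) (x m) = Real.sqrt (dist (x n) (x m) ^ 2) :=
            (Real.sqrt_sq dist_nonneg).symm
        _ ≤ b N := Real.sqrt_le_sqrt this
    · have hu0 : Tendsto u atTop (𝓝 0) := tendsto_one_div_add_atTop_nhds_zero_nat
      have hf : Tendsto (fun N => 4 * (L + u N) ^ 2 - 4 * d N ^ 2) atTop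
          (𝓝 (4 * (L + 0) ^ 2 - 4 * L ^ 2)) :=
        (((tendsto_const_nhds.add hu0).pow 2).const_mul 4).sub
          ((hL.pow 2).const_mul 4)
      have : (4 * (L + 0) ^ 2 - 4 * L ^ 2 : ℝ) = 0 := by ring
      rw [this] at hf
      simpa using hf.sqrt
  obtain ⟨z, hz⟩ := cauchySeq_tendsto_of_complete hcauchy
  refine ⟨z, Set.mem_iInter.mpr fun N => ?_⟩
  apply (hcl N).mem_of_tendsto hz
  filter_upwards [eventually_ge_atTop N] with n hn
  exact hanti hn (hxmem n)
end

section
/- Every convex lower semicontinuous function f : H → (−∞,∞] on a Hadamard space (H,d) is bounded from below on every bounded subset of H. -/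
open Filter Topology

/-- A convex lower semicontinuous function `f : H → (-∞,∞]` on a Hadamard space is
bounded from below on every bounded subset of `H`. -/
theorem convex_lsc_bddBelow_on_bounded
    {H : Type*} [MetricSpace H] [CompleteSpace H] (G : Hadamard H)
    (f : H → EReal) (hf_ne_bot : ∀ x : H, f x ≠ ⊥)
    (hconv : GeoConvex G f) (hlsc : LowerSemicontinuous f)
    (B : Set H) (hB : Bornology.IsBounded B) :
    ∃ m : ℝ, ∀ x ∈ B, (m : EReal) ≤ f x := by
  by_contra hcon
  push_neg at hcon
  -- choose points with very negative values
  have hsel : ∀ n : ℕ, ∃ x ∈ B, f x < ((-(4 ^ (n + 1)) : ℝ) : EReal) := fun n =>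
    hcon (-(4 ^ (n + 1)))
  choose x hxB hxf using hsel
  -- bound on B
  obtain ⟨R, hR⟩ := hB.subset_closedBall (x 0)
  have hR0 : 0 ≤ R := by
    have := hR (hxB 0); simpa using this
  have hxR : ∀ n, dist (x n) (x 0) ≤ R := fun n => hR (hxB n)
  -- the sequence of geodesic combinations
  set t : ℕ → ℝ := fun n => (1 / 2 : ℝ) ^ (n + 1) with ht
  have htmem : ∀ n, t n ∈ Set.Icc (0 : ℝ) 1 := by
    intro n
    constructor
    · positivity
    · exact pow_le_one₀ (by norm_num) (by norm_num)
  let z : ℕ → H := fun n => Nat.rec (x 0) (fun n zn => G.geo zn (x (n + 1)) (t n)) n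
  have hz0 : z 0 = x 0 := rfl
  have hzs : ∀ n, z (n + 1) = G.geo (z n) (x (n + 1)) (t n) := fun n => rfl
  -- z stays in the ball of radius R around x 0
  have hzR : ∀ n, dist (z n) (x 0) ≤ R := by
    intro n
    induction n with
    | zero => simpa [hz0] using hR0
    | succ n ih =>
      have hc := G.cat0 (x 0) (z n) (x (n + 1)) (t n) (htmem n)
      rw [← hzs n] at hc
      have h1 : dist (x 0) (z n) ≤ R := by rw [dist_comm]; exact ih
      have h2 : dist (x 0) (x (n + 1)) ≤ R := by rw [dist_comm]; exact hxR (n + 1)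
      have ht0 : 0 ≤ t n := (htmem n).1
      have ht1 : t n ≤ 1 := (htmem n).2
      have hd0 : (0:ℝ) ≤ dist (x 0) (z (n+1)) := dist_nonneg
      have hd1 : (0:ℝ) ≤ dist (x 0) (z n) := dist_nonneg
      have hd2 : (0:ℝ) ≤ dist (x 0) (x (n+1)) := dist_nonneg
      have hdd : (0:ℝ) ≤ dist (z n) (x (n+1)) := dist_nonneg
      rw [dist_comm]
      have h1s : dist (x 0) (z n) ^ 2 ≤ R ^ 2 := by nlinarith
      have h2s : dist (x 0) (x (n+1)) ^ 2 ≤ R ^ 2 := by nlinarith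
      have hsq : dist (x 0) (z (n+1)) ^ 2 ≤ R ^ 2 := by
        nlinarith [sq_nonneg (dist (z n) (x (n+1))), mul_nonneg (mul_nonneg ht0 (by linarith : (0:ℝ) ≤ 1 - t n)) (sq_nonneg (dist (z n) (x (n+1))))]
      nlinarith [hsq]
  -- Cauchy
  have hdz : ∀ n, dist (z n) (z (n + 1)) ≤ (2 * R) * (1 / 2 : ℝ) ^ n := by
    intro n
    have h0 : (0:ℝ) ∈ Set.Icc (0:ℝ) 1 := by constructor <;> norm_num
    have := G.geo_dist (z n) (x (n + 1)) 0 h0 (t n) (htmem n)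
    rw [G.geo_zero, ← hzs n] at this
    rw [this]
    have hb : dist (z n) (x (n + 1)) ≤ 2 * R := by
      calc dist (z n) (x (n + 1)) ≤ dist (z n) (x 0) + dist (x 0) (x (n+1)) :=
            dist_triangle _ _ _
        _ ≤ R + R := add_le_add (hzR n) (by rw [dist_comm]; exact hxR (n+1))
        _ = 2 * R := by ring
    have ht0 : 0 ≤ t n := (htmem n).1
    have habs : |0 - t n| = t n := by rw [abs_sub_comm]; simpa using abs_of_nonneg ht0
    rw [habs]
    have : t n = (1/2 : ℝ) * (1/2)^n := by rw [ht]; ring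
    rw [this]
    nlinarith [pow_nonneg (by norm_num : (0:ℝ) ≤ 1/2) n, dist_nonneg (x := z n) (y := x (n+1))]
  have hcauchy : CauchySeq z := cauchySeq_of_le_geometric (1/2) (2*R) (by norm_num) hdz
  obtain ⟨zstar, hzstar⟩ := cauchySeq_tendsto_of_complete hcauchy
  -- values along z
  have key : ∀ n : ℕ, ∃ r : ℝ, f (z n) = (r : EReal) ∧ r ≤ -(2 ^ (n + 1)) := by
    intro n
    induction n with
    | zero =>
      have h := hxf 0
      have hne : f (z 0) ≠ ⊤ := by
        rw [hz0]; intro he; rw [he] at h; exact (not_top_lt h)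
      obtain ⟨r, hr⟩ : ∃ r : ℝ, f (z 0) = r := by
        lift f (z 0) to ℝ using ⟨hne, hf_ne_bot _⟩ with r; exact ⟨r, rfl⟩
      refine ⟨r, hr, ?_⟩
      have : (r : EReal) < ((-(4 ^ (0 + 1)) : ℝ) : EReal) := by rw [← hr, hz0]; exact h
      have := EReal.coe_lt_coe_iff.mp this
      norm_num at this ⊢
      linarith
    | succ n ih =>
      obtain ⟨r, hr, hrle⟩ := ih
      -- value at x (n+1)
      have hx := hxf (n + 1)
      have hxne : f (x (n + 1)) ≠ ⊤ := fun he => by rw [he] at hx; exact (not_top_lt hx)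
      obtain ⟨s, hs⟩ : ∃ s : ℝ, f (x (n+1)) = s := by
        lift f (x (n+1)) to ℝ using ⟨hxne, hf_ne_bot _⟩ with s; exact ⟨s, rfl⟩
      have hsle : s ≤ -(4 ^ (n + 2)) := by
        have : (s : EReal) < ((-(4 ^ (n + 1 + 1)) : ℝ) : EReal) := by rw [← hs]; exact hx
        have h2 := EReal.coe_lt_coe_iff.mp this
        have he : n + 1 + 1 = n + 2 := rfl
        rw [he] at h2
        linarith
      have hcv := hconv (z n) (x (n + 1)) (t n) (htmem n)
      rw [← hzs n, hr, hs] at hcv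
      have heq : ((1 - t n : ℝ) : EReal) * (r : EReal) + ((t n : ℝ) : EReal) * (s : EReal)
          = (((1 - t n) * r + t n * s : ℝ) : EReal) := by push_cast; ring
      rw [heq] at hcv
      have hne : f (z (n + 1)) ≠ ⊤ := fun he => by
        rw [he] at hcv; exact not_le.mpr (EReal.coe_lt_top _) hcv
      obtain ⟨q, hq⟩ : ∃ q : ℝ, f (z (n+1)) = q := by
        lift f (z (n+1)) to ℝ using ⟨hne, hf_ne_bot _⟩ with q; exact ⟨q, rfl⟩
      refine ⟨q, hq, ?_⟩
      rw [hq] at hcv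
      have hqle : q ≤ (1 - t n) * r + t n * s := EReal.coe_le_coe_iff.mp hcv
      have ht0 : 0 ≤ t n := (htmem n).1
      have ht1 : t n ≤ 1 := (htmem n).2
      -- t n * 4^(n+2) = 2^(n+3)
      have hts : t n * (4 : ℝ) ^ (n + 2) = 2 ^ (n + 3) := by
        have h4 : (4:ℝ) ^ (n+2) = 2 ^ (n+1) * 2 ^ (n+3) := by
          rw [← pow_add]
          have : n + 1 + (n + 3) = 2 * (n + 2) := by ring
          rw [this, pow_mul]; norm_num
        rw [ht, h4, ← mul_assoc, ← mul_pow]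
        norm_num
      have h1 : (1 - t n) * r ≤ (1 - t n) * (-(2 ^ (n + 1))) :=
        mul_le_mul_of_nonneg_left hrle (by linarith)
      have h2 : t n * s ≤ t n * (-(4 ^ (n + 2))) :=
        mul_le_mul_of_nonneg_left hsle ht0
      have hp1 : (0:ℝ) ≤ (2:ℝ) ^ (n + 1) := by positivity
      have e1 : (2:ℝ) ^ (n + 3) = 2 ^ (n + 1) * 4 := by
        rw [show n + 3 = (n + 1) + 2 from rfl, pow_add]; norm_num
      have e2 : (2:ℝ) ^ (n + 1 + 1) = 2 ^ (n + 1) * 2 := pow_succ 2 (n + 1)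
      nlinarith [hqle, h1, h2, hts, e1, e2, mul_le_of_le_one_left hp1 ht1]
  -- lower semicontinuity at the limit gives a contradiction
  obtain ⟨c, hc1, hc2⟩ := exists_between (bot_lt_iff_ne_bot.mpr (hf_ne_bot zstar))
  have hcne_top : c ≠ ⊤ := fun he => by rw [he] at hc2; exact not_top_lt hc2
  lift c to ℝ using ⟨hcne_top, ne_of_gt hc1⟩ with c
  have hev1 : ∀ᶠ n in atTop, (c : EReal) < f (z n) :=
    hzstar.eventually (hlsc zstar c hc2)
  have hev2 : ∀ᶠ n : ℕ in atTop, -c < (2 : ℝ) ^ (n + 1) := by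
    have h2 : Tendsto (fun n : ℕ => (2:ℝ) ^ (n+1)) atTop atTop :=
      (tendsto_pow_atTop_atTop_of_one_lt (by norm_num : (1:ℝ) < 2)).comp
        (tendsto_add_atTop_nat 1)
    exact h2.eventually_gt_atTop (-c)
  obtain ⟨n, hn1, hn2⟩ := (hev1.and hev2).exists
  obtain ⟨r, hr, hrle⟩ := key n
  rw [hr] at hn1
  have : c < r := EReal.coe_lt_coe_iff.mp hn1
  linarith
end

section
/- Let (H,d) be a Hadamard space and f : H → (−∞,∞] a proper convex lower semicontinuous function which is coercive, i.e. f(x) → ∞ whenever d(x,x₀) → ∞ for some (equivalently any) fixed x₀ ∈ H. Then f attains its minimum on H. -/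
/-!
For `c > inf f` the sublevel sets `{f ≤ c}` are nonempty, closed (lower semicontinuity), convex
and bounded (coercivity), and they shrink to the set of minimizers as `c ↓ inf f`. In a Hadamard
space nested nonempty bounded closed convex sets `S n` meet: if `r n` is the distance from a fixed
`z` to `S n`, the CAT(0) inequality at the midpoint gives
`d(x,y)² ≤ 2 d(z,x)² + 2 d(z,y)² - 4 r N²` for `x, y ∈ S N`, so points `u n ∈ S n` almost
nearest to `z` form a Cauchy sequence, and its limit lies in every `S n`.
-/

open Filter Topology

open Metric

namespace Hadamard

variable {H : Type*} [MetricSpace H] (G : Hadamard H)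

def Convex (s : Set H) : Prop :=
  ∀ x ∈ s, ∀ y ∈ s, ∀ t ∈ Set.Icc (0 : ℝ) 1, G.geo x y t ∈ s

theorem dist_sq_le_of_midpoint (z x y : H) :
    dist x y ^ 2 ≤ 2 * dist z x ^ 2 + 2 * dist z y ^ 2 - 4 * dist z (G.geo x y (1 / 2)) ^ 2 := by
  have := G.cat0 z x y (1 / 2) (by norm_num)
  linarith

variable {G}

-- The CAT(0) substitute for the parallelogram law that makes nearest points to convex sets unique.
theorem dist_sq_le_of_mem_convex {s : Set H} (hs : G.Convex s) {x y : H} (hx : x ∈ s)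
    (hy : y ∈ s) (z : H) :
    dist x y ^ 2 ≤ 2 * dist z x ^ 2 + 2 * dist z y ^ 2 - 4 * infDist z s ^ 2 := by
  have hmid : infDist z s ≤ dist z (G.geo x y (1 / 2)) :=
    infDist_le_dist_of_mem (hs x hx y hy _ (by norm_num))
  have := G.dist_sq_le_of_midpoint z x y
  nlinarith [infDist_nonneg (x := z) (s := s)]

theorem cauchySeq_of_tendsto_infDist {S : ℕ → Set H} (hanti : Antitone S)
    (hconv : ∀ n, G.Convex (S n)) {u : ℕ → H} (hu : ∀ n, u n ∈ S n) {z : H} {ρ : ℝ}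
    (hinf : Tendsto (fun n => infDist z (S n)) atTop (𝓝 ρ))
    (hdist : Tendsto (fun n => dist z (u n)) atTop (𝓝 ρ)) :
    CauchySeq u := by
  rw [cauchySeq_iff_tendsto_dist_atTop_0]
  have hmin : Tendsto (fun p : ℕ × ℕ => min p.1 p.2) atTop atTop :=
    tendsto_atTop.2 fun N => (eventually_ge_atTop (N, N)).mono fun p hp => le_min hp.1 hp.2
  have hbound : ∀ p : ℕ × ℕ, dist (u p.1) (u p.2) ^ 2 ≤ 2 * dist z (u p.1) ^ 2
      + 2 * dist z (u p.2) ^ 2 - 4 * infDist z (S (min p.1 p.2)) ^ 2 := fun p =>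
    dist_sq_le_of_mem_convex (hconv _) (hanti (min_le_left _ _) (hu _))
      (hanti (min_le_right _ _) (hu _)) z
  have hfst : Tendsto (fun p : ℕ × ℕ => dist z (u p.1)) atTop (𝓝 ρ) := by
    rw [← prod_atTop_atTop_eq]; exact hdist.comp tendsto_fst
  have hsnd : Tendsto (fun p : ℕ × ℕ => dist z (u p.2)) atTop (𝓝 ρ) := by
    rw [← prod_atTop_atTop_eq]; exact hdist.comp tendsto_snd
  have hlim : Tendsto (fun p : ℕ × ℕ => 2 * dist z (u p.1) ^ 2 + 2 * dist z (u p.2) ^ 2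
      - 4 * infDist z (S (min p.1 p.2)) ^ 2) atTop (𝓝 0) := by
    have := ((hfst.pow 2).const_mul 2).add ((hsnd.pow 2).const_mul 2) |>.sub
      (((hinf.comp hmin).pow 2).const_mul 4)
    rwa [show 2 * ρ ^ 2 + 2 * ρ ^ 2 - 4 * ρ ^ 2 = 0 by ring] at this
  have hsq : Tendsto (fun p : ℕ × ℕ => dist (u p.1) (u p.2) ^ 2) atTop (𝓝 0) :=
    tendsto_of_tendsto_of_tendsto_of_le_of_le tendsto_const_nhds hlim
      (fun p => sq_nonneg _) hbound
  simpa [Real.sqrt_sq dist_nonneg] using hsq.sqrt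

theorem iInter_nonempty_of_antitone_convex [CompleteSpace H] {S : ℕ → Set H}
    (hanti : Antitone S) (hne : ∀ n, (S n).Nonempty) (hclosed : ∀ n, IsClosed (S n))
    (hconv : ∀ n, G.Convex (S n)) (hbdd : Bornology.IsBounded (S 0)) :
    (⋂ n, S n).Nonempty := by
  obtain ⟨z, hz⟩ := hne 0
  set r : ℕ → ℝ := fun n => infDist z (S n)
  have hr_mono : Monotone r := fun m n hmn =>
    infDist_le_infDist_of_subset (hanti hmn) (hne n)
  have hr_bdd : BddAbove (Set.range r) := by
    refine ⟨diam (S 0), ?_⟩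
    rintro _ ⟨n, rfl⟩
    obtain ⟨y, hy⟩ := hne n
    exact (infDist_le_dist_of_mem hy).trans
      (dist_le_diam_of_mem hbdd hz (hanti (Nat.zero_le n) hy))
  have hr := tendsto_atTop_ciSup hr_mono hr_bdd
  have hchoose : ∀ n : ℕ, ∃ y ∈ S n, dist z y < r n + 1 / (n + 1) := fun n =>
    (infDist_lt_iff (hne n)).1 (lt_add_of_pos_right _ Nat.one_div_pos_of_nat)
  choose u hu hdist using hchoose
  have hdist_tendsto : Tendsto (fun n => dist z (u n)) atTop (𝓝 (⨆ n, r n)) := by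
    refine tendsto_of_tendsto_of_tendsto_of_le_of_le hr ?_
      (fun n => infDist_le_dist_of_mem (hu n)) (fun n => (hdist n).le)
    simpa using hr.add tendsto_one_div_add_atTop_nhds_zero_nat
  obtain ⟨y, hy⟩ := cauchySeq_tendsto_of_complete
    (cauchySeq_of_tendsto_infDist hanti hconv hu hr hdist_tendsto)
  exact ⟨y, Set.mem_iInter.2 fun N => (hclosed N).mem_of_tendsto hy
    (eventually_atTop.2 ⟨N, fun n hn => hanti hn (hu n)⟩)⟩

end Hadamard

theorem GeoConvex.convex_setOf_le {H : Type*} [MetricSpace H] {G : Hadamard H}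
    {f : H → EReal} (hf : GeoConvex G f) {c : EReal} (hc : c ≠ ⊥) :
    G.Convex {x | f x ≤ c} := by
  intro x hx y hy t ht
  induction c using EReal.rec with
  | bot => exact absurd rfl hc
  | top => exact le_top (a := f (G.geo x y t))
  | coe c =>
    have h1t : (0 : EReal) ≤ ((1 - t : ℝ) : EReal) := EReal.coe_nonneg.2 (by linarith [ht.2])
    have ht0 : (0 : EReal) ≤ ((t : ℝ) : EReal) := EReal.coe_nonneg.2 ht.1
    calc f (G.geo x y t) ≤ ((1 - t : ℝ) : EReal) * f x + ((t : ℝ) : EReal) * f y := hf x y t ht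
      _ ≤ ((1 - t : ℝ) : EReal) * c + ((t : ℝ) : EReal) * c :=
        add_le_add (mul_le_mul_of_nonneg_left hx h1t) (mul_le_mul_of_nonneg_left hy ht0)
      _ = c := by norm_cast; ring_nf

theorem isBounded_setOf_le_of_coercive {X : Type*} [PseudoMetricSpace X] {f : X → EReal}
    {x₀ : X} (hcoer : ∀ M : ℝ, ∃ R : ℝ, ∀ x : X, R ≤ dist x x₀ → (M : EReal) ≤ f x)
    {c : EReal} (hc : c ≠ ⊤) : Bornology.IsBounded {x | f x ≤ c} := by
  obtain ⟨M, hcM, -⟩ := EReal.lt_iff_exists_real_btwn.1 hc.lt_top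
  obtain ⟨R, hR⟩ := hcoer M
  refine isBounded_ball (x := x₀) (r := R) |>.subset fun x hx => mem_ball.2 ?_
  by_contra hfar
  exact (hx.trans_lt hcM).not_ge (hR x (not_lt.1 hfar))

theorem coercive_convex_lsc_attains_min_general
    {H : Type*} [MetricSpace H] [CompleteSpace H] (G : Hadamard H)
    (f : H → EReal)
    (hproper : ∃ x : H, f x ≠ ⊤)
    (hconv : GeoConvex G f) (hlsc : LowerSemicontinuous f)
    (x₀ : H)
    (hcoer : ∀ M : ℝ, ∃ R : ℝ, ∀ x : H, R ≤ dist x x₀ → (M : EReal) ≤ f x) :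
    ∃ z : H, ∀ x : H, f z ≤ f x := by
  obtain ⟨x₁, hx₁⟩ := hproper
  have hm : ⨅ x, f x < ⊤ := (iInf_le f x₁).trans_lt hx₁.lt_top
  obtain ⟨c, hc_anti, hc_mem, hc_lim⟩ := exists_seq_strictAnti_tendsto' hm
  obtain ⟨z, hz⟩ := G.iInter_nonempty_of_antitone_convex (S := fun n => {x | f x ≤ c n})
    (fun m n hmn x hx => hx.trans (hc_anti.antitone hmn))
    (fun n => (iInf_lt_iff.1 (hc_mem n).1).imp fun x hx => hx.le)
    (fun n => hlsc.isClosed_preimage (c n))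
    (fun n => hconv.convex_setOf_le (ne_bot_of_gt (hc_mem n).1))
    (isBounded_setOf_le_of_coercive hcoer (hc_mem 0).2.ne)
  exact ⟨z, fun x => (ge_of_tendsto' hc_lim (Set.mem_iInter.1 hz)).trans (iInf_le f x)⟩

/-- A proper convex lower semicontinuous coercive function on a Hadamard space
attains its minimum. -/
theorem coercive_convex_lsc_attains_min
    {H : Type*} [MetricSpace H] [CompleteSpace H] (G : Hadamard H)
    (f : H → EReal) (hf_ne_bot : ∀ x : H, f x ≠ ⊥)
    (hproper : ∃ x : H, f x ≠ ⊤)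
    (hconv : GeoConvex G f) (hlsc : LowerSemicontinuous f)
    (x₀ : H)
    (hcoer : ∀ M : ℝ, ∃ R : ℝ, ∀ x : H, R ≤ dist x x₀ → (M : EReal) ≤ f x) :
    ∃ z : H, ∀ x : H, f z ≤ f x :=
  coercive_convex_lsc_attains_min_general G f hproper hconv hlsc x₀ hcoer
end

section
/- Existence and uniqueness of the Fréchet mean: let (H,d) be a Hadamard space, a₁,…,a_N ∈ H, and w₁,…,w_N positive weights with Σₙ wₙ = 1. Then the function φ(x) = Σₙ₌₁^N wₙ·d(x,aₙ)² has exactly one minimizer Ξ ∈ H. -/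
/-!
The CAT(0) inequality at `t = 1/2` makes each `x ↦ d(x, aₙ)²`, hence also their convex
combination `φ`, strongly convex along midpoints:
`φ(m) ≤ (φ x + φ y)/2 - d(x,y)²/4` for the midpoint `m` of `x` and `y`. Comparing with
`inf φ` gives `d(x,y)² ≤ 2(φ x - inf φ) + 2(φ y - inf φ)`, so minimizing sequences are
Cauchy, their limit is a minimizer by completeness and lower semicontinuity, and two minimizers
are at distance `0`.
-/

open Filter Topology

section MidpointConvex

variable {X : Type*} [MetricSpace X] {φ : X → ℝ}

theorem dist_sq_le_of_midpoint_le {m : ℝ} (hm : ∀ z, m ≤ φ z)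
    (hmid : ∀ x y, ∃ z, φ z ≤ (φ x + φ y) / 2 - dist x y ^ 2 / 4) (x y : X) :
    dist x y ^ 2 ≤ 2 * (φ x - m) + 2 * (φ y - m) := by
  obtain ⟨z, hz⟩ := hmid x y
  linarith [hm z]

theorem existsUnique_forall_le_of_midpoint_le [CompleteSpace X] [Nonempty X]
    (hφ : LowerSemicontinuous φ) (hbdd : BddBelow (Set.range φ))
    (hmid : ∀ x y, ∃ z, φ z ≤ (φ x + φ y) / 2 - dist x y ^ 2 / 4) :
    ∃! ξ, ∀ x, φ ξ ≤ φ x := by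
  set m := sInf (Set.range φ)
  have hm : ∀ x, m ≤ φ x := fun x => csInf_le hbdd ⟨x, rfl⟩
  have hdist := dist_sq_le_of_midpoint_le hm hmid
  obtain ⟨v, -, hvm, hv⟩ := exists_seq_tendsto_sInf (Set.range_nonempty φ) hbdd
  choose u hu using hv
  replace hvm : Tendsto (fun k => φ (u k)) atTop (𝓝 m) := by rwa [← funext hu] at hvm
  have hcauchy : CauchySeq u := by
    rw [cauchySeq_iff_tendsto_dist_atTop_0, ← prod_atTop_atTop_eq]
    have hgap : Tendsto (fun p : ℕ × ℕ => 2 * (φ (u p.1) - m) + 2 * (φ (u p.2) - m))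
        (atTop ×ˢ atTop) (𝓝 0) := by
      have h1 := (hvm.comp (tendsto_fst (g := (atTop : Filter ℕ)))).sub_const m
      have h2 := (hvm.comp (tendsto_snd (f := (atTop : Filter ℕ)))).sub_const m
      simpa using (h1.const_mul 2).add (h2.const_mul 2)
    refine squeeze_zero (fun _ => dist_nonneg) (fun p => ?_) (by simpa using hgap.sqrt)
    exact Real.le_sqrt_of_sq_le (hdist _ _)
  obtain ⟨ξ, hξ⟩ := cauchySeq_tendsto_of_complete hcauchy
  have hξm : φ ξ ≤ m := by
    by_contra! hlt
    obtain ⟨c, hmc, hcξ⟩ := exists_between hlt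
    obtain ⟨k, hck, hkc⟩ :=
      (hξ.eventually (hφ ξ c hcξ) |>.and (hvm.eventually (gt_mem_nhds hmc))).exists
    exact hck.not_gt hkc
  refine ⟨ξ, fun x => hξm.trans (hm x), fun y hy => ?_⟩
  have : dist y ξ ^ 2 ≤ 0 := by linarith [hdist y ξ, hy ξ, hm y]
  exact dist_eq_zero.mp (pow_eq_zero_iff two_ne_zero |>.mp (this.antisymm (sq_nonneg _)))

end MidpointConvex

namespace Hadamard

variable {H : Type*} [MetricSpace H] (G : Hadamard H)

theorem dist_geo_half_sq_le (x y z : H) :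
    dist (G.geo x y (1 / 2)) z ^ 2 ≤ (dist x z ^ 2 + dist y z ^ 2) / 2 - dist x y ^ 2 / 4 := by
  have h := G.cat0 z x y (1 / 2) ⟨by norm_num, by norm_num⟩
  rw [dist_comm z, dist_comm z x, dist_comm z y] at h
  linarith

theorem sum_mul_dist_geo_half_sq_le {ι : Type*} (s : Finset ι) {w : ι → ℝ}
    (hw : ∀ i ∈ s, 0 ≤ w i) (hsum : ∑ i ∈ s, w i = 1) (a : ι → H) (x y : H) :
    ∑ i ∈ s, w i * dist (G.geo x y (1 / 2)) (a i) ^ 2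
      ≤ (∑ i ∈ s, w i * dist x (a i) ^ 2 + ∑ i ∈ s, w i * dist y (a i) ^ 2) / 2
        - dist x y ^ 2 / 4 :=
  calc ∑ i ∈ s, w i * dist (G.geo x y (1 / 2)) (a i) ^ 2
      ≤ ∑ i ∈ s, w i * ((dist x (a i) ^ 2 + dist y (a i) ^ 2) / 2 - dist x y ^ 2 / 4) :=
        Finset.sum_le_sum fun i hi =>
          mul_le_mul_of_nonneg_left (G.dist_geo_half_sq_le x y (a i)) (hw i hi)
    _ = (∑ i ∈ s, w i * dist x (a i) ^ 2 + ∑ i ∈ s, w i * dist y (a i) ^ 2) / 2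
          - (∑ i ∈ s, w i) * (dist x y ^ 2 / 4) := by
        rw [Finset.sum_mul, ← Finset.sum_add_distrib, Finset.sum_div, ← Finset.sum_sub_distrib]
        exact Finset.sum_congr rfl fun i _ => by ring
    _ = _ := by rw [hsum, one_mul]

end Hadamard

/-- Existence and uniqueness of the Fréchet mean in a Hadamard space. -/
theorem frechet_mean_existsUnique
    {H : Type*} [MetricSpace H] [CompleteSpace H] (G : Hadamard H)
    (N : ℕ) (a : Fin N → H) (w : Fin N → ℝ)
    (hw : ∀ n, 0 < w n) (hsum : ∑ n, w n = 1) :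
    ∃! Ξ : H, ∀ x : H,
      ∑ n, w n * dist Ξ (a n) ^ 2 ≤ ∑ n, w n * dist x (a n) ^ 2 := by
  obtain ⟨n, -⟩ := Finset.nonempty_of_sum_ne_zero (hsum.symm ▸ one_ne_zero : ∑ n, w n ≠ 0)
  have : Nonempty H := ⟨a n⟩
  have hcont : Continuous fun x => ∑ n, w n * dist x (a n) ^ 2 := by fun_prop
  have hnonneg : ∀ x, 0 ≤ ∑ n, w n * dist x (a n) ^ 2 := fun x =>
    Finset.sum_nonneg fun n _ => mul_nonneg (hw n).le (sq_nonneg _)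
  exact existsUnique_forall_le_of_midpoint_le hcont.lowerSemicontinuous
    ⟨0, Set.forall_mem_range.mpr hnonneg⟩ fun x y =>
      ⟨G.geo x y (1 / 2),
        G.sum_mul_dist_geo_half_sq_le _ (fun n _ => (hw n).le) hsum a x y⟩
end

section
/- Lipschitz dependence of the Fréchet mean on its arguments: let (H,d) be a Hadamard space, w₁,…,w_N positive weights with Σₙ wₙ = 1, and a₁,…,a_N, a₁′,…,a_N′ ∈ H. If Ξ is the unique minimizer of x ↦ Σₙ wₙ·d(x,aₙ)² and Ξ′ is the unique minimizer of x ↦ Σₙ wₙ·d(x,aₙ′)², then d(Ξ,Ξ′) ≤ Σₙ₌₁^N wₙ·d(aₙ,aₙ′). -/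
/-!
Let `F` and `F'` be the Fréchet functionals of the points `aₙ` and `aₙ'`. The CAT(0) inequality
makes them `1`-strongly convex along geodesics, whence the variance inequalities
`F Ξ + d(Ξ, Ξ')² ≤ F Ξ'` and `F' Ξ' + d(Ξ, Ξ')² ≤ F' Ξ`. Adding them bounds `2 d(Ξ, Ξ')²` by a
weighted sum of quasilinearizations `2 ⟨Ξ Ξ', aₙ aₙ'⟩`, and the quadruple inequality
`⟨Ξ Ξ', aₙ aₙ'⟩ ≤ d(Ξ, Ξ') d(aₙ, aₙ')` leaves `d(Ξ, Ξ')² ≤ d(Ξ, Ξ') ∑ₙ wₙ d(aₙ, aₙ')`.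
The quadruple inequality itself comes from the `⊠`-inequality for small quadrilaterals, summed
over a fine grid spanned by subdivisions of the two segments.
-/

open Filter Topology

/-- Berg–Nikolaev's quasilinearization: `quasiInner a b c d` plays the role of `⟪b - a, d - c⟫`. -/
noncomputable def quasiInner {X : Type*} [PseudoMetricSpace X] (a b c d : X) : ℝ :=
  (dist a d ^ 2 + dist b c ^ 2 - dist a c ^ 2 - dist b d ^ 2) / 2

def frechetFun {X : Type*} [PseudoMetricSpace X] {ι : Type*} [Fintype ι]
    (w : ι → ℝ) (a : ι → X) (x : X) : ℝ :=
  ∑ i, w i * dist x (a i) ^ 2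

section QuasiInner

variable {X : Type*} [PseudoMetricSpace X]

lemma quasiInner_comm (a b c d : X) : quasiInner a b c d = quasiInner c d a b := by
  unfold quasiInner
  rw [dist_comm b c, dist_comm a c, dist_comm b d, dist_comm a d]
  ring

lemma quasiInner_self_left (a c d : X) : quasiInner a a c d = 0 := by
  unfold quasiInner
  ring

lemma quasiInner_self_right (a b c : X) : quasiInner a b c c = 0 := by
  rw [quasiInner_comm, quasiInner_self_left]

lemma quasiInner_add_left (a b e c d : X) :
    quasiInner a b c d + quasiInner b e c d = quasiInner a e c d := by
  unfold quasiInner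
  ring

lemma quasiInner_sum_range_left (p : ℕ → X) (c d : X) (n : ℕ) :
    ∑ i ∈ Finset.range n, quasiInner (p i) (p (i + 1)) c d = quasiInner (p 0) (p n) c d := by
  induction n with
  | zero => simp [quasiInner_self_left]
  | succ n ih => rw [Finset.sum_range_succ, ih, quasiInner_add_left]

lemma quasiInner_sum_range_right (a b : X) (q : ℕ → X) (m : ℕ) :
    ∑ j ∈ Finset.range m, quasiInner a b (q j) (q (j + 1)) = quasiInner a b (q 0) (q m) := by
  simp only [quasiInner_comm a b]
  exact quasiInner_sum_range_left q a b m

end QuasiInner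

/-- `s ↦ s * A ^ 2 + L ^ 2 / s` is minimal at `s = L / A`, which is approximated by
`⌈k * L / A⌉₊ / k`. -/
lemma le_two_mul_mul_of_forall_nat_div {c A L : ℝ} (hA : 0 < A) (hL : 0 < L)
    (h : ∀ n m : ℕ, 0 < n → 0 < m → c ≤ m / n * A ^ 2 + n / m * L ^ 2) :
    c ≤ 2 * A * L := by
  set r := L / A
  have hr : 0 < r := div_pos hL hA
  have hφ : ContinuousAt (fun s : ℝ => s * A ^ 2 + s⁻¹ * L ^ 2) r := by
    fun_prop (disch := exact hr.ne')
  have hratio : Tendsto (fun k : ℕ => (⌈r * k⌉₊ : ℝ) / k) atTop (𝓝 r) :=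
    (tendsto_nat_ceil_mul_div_atTop hr.le).comp tendsto_natCast_atTop_atTop
  have hlim := hφ.tendsto.comp hratio
  have hφr : r * A ^ 2 + r⁻¹ * L ^ 2 = 2 * A * L := by
    simp only [r]
    field_simp
    ring
  rw [hφr] at hlim
  refine ge_of_tendsto hlim (eventually_atTop.2 ⟨1, fun k hk => ?_⟩)
  have hm : 0 < ⌈r * k⌉₊ := Nat.ceil_pos.2 (by positivity)
  simpa only [Function.comp, inv_div] using h k _ hk hm

namespace Hadamard

variable {H : Type*} [MetricSpace H]

lemma cat0_midpoint (G : Hadamard H) (z x y : H) :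
    dist z (G.geo x y (1 / 2)) ^ 2
      ≤ (dist z x ^ 2 + dist z y ^ 2) / 2 - dist x y ^ 2 / 4 := by
  have := G.cat0 z x y (1 / 2) (by norm_num)
  linarith

/-- The `⊠`-inequality: the squared diagonals `ad`, `bc` of the quadrilateral `abdc` are bounded
by its squared sides. Apply the CAT(0) inequality at the midpoints of `bc` and `ad`. -/
lemma two_mul_quasiInner_le (G : Hadamard H) (a b c d : H) :
    2 * quasiInner a b c d ≤ dist a b ^ 2 + dist c d ^ 2 := by
  have hm := G.cat0_midpoint (G.geo b c (1 / 2)) a d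
  have ha := G.cat0_midpoint a b c
  have hd := G.cat0_midpoint d b c
  rw [dist_comm _ a, dist_comm _ d] at hm
  rw [dist_comm d b, dist_comm d c] at hd
  unfold quasiInner
  linarith [sq_nonneg (dist (G.geo b c (1 / 2)) (G.geo a d (1 / 2)))]

lemma geo_natCast_div (G : Hadamard H) (x y : H) {n : ℕ} (hn : n ≠ 0) :
    G.geo x y ((n : ℝ) / n) = y := by
  rw [div_self (Nat.cast_ne_zero.2 hn), G.geo_one]

lemma dist_geo_div_succ (G : Hadamard H) (x y : H) {n i : ℕ} (hi : i < n) :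
    dist (G.geo x y (i / n)) (G.geo x y ((i + 1 : ℕ) / n)) = dist x y / n := by
  have hmem : ∀ k ≤ n, ((k : ℝ) / n) ∈ Set.Icc (0 : ℝ) 1 := fun k hk =>
    ⟨by positivity, div_le_one_of_le₀ (by exact_mod_cast hk) (by positivity)⟩
  rw [G.geo_dist x y _ (hmem i hi.le) _ (hmem (i + 1) hi), Nat.cast_succ, ← sub_div,
    sub_add_cancel_left, abs_div, abs_neg, abs_one, Nat.abs_cast, one_div_mul_eq_div]

/-- Subdividing `ab` into `n` and `cd` into `m` equal pieces and summing the `⊠`-inequality over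
the `n * m` cells. -/
lemma two_mul_quasiInner_le_of_subdivision (G : Hadamard H) (a b c d : H) {n m : ℕ}
    (hn : 0 < n) (hm : 0 < m) :
    2 * quasiInner a b c d ≤ m / n * dist a b ^ 2 + n / m * dist c d ^ 2 := by
  set p : ℕ → H := fun i => G.geo a b (i / n)
  set q : ℕ → H := fun j => G.geo c d (j / m)
  have hcell : ∀ i ∈ Finset.range n, ∀ j ∈ Finset.range m,
      2 * quasiInner (p i) (p (i + 1)) (q j) (q (j + 1))
        ≤ (dist a b / n) ^ 2 + (dist c d / m) ^ 2 := by
    intro i hi j hj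
    rw [← G.dist_geo_div_succ a b (Finset.mem_range.1 hi),
      ← G.dist_geo_div_succ c d (Finset.mem_range.1 hj)]
    exact G.two_mul_quasiInner_le _ _ _ _
  have hsplit : quasiInner a b c d
      = ∑ i ∈ Finset.range n, ∑ j ∈ Finset.range m,
          quasiInner (p i) (p (i + 1)) (q j) (q (j + 1)) := by
    simp only [quasiInner_sum_range_right, quasiInner_sum_range_left, p, q, Nat.cast_zero,
      zero_div, G.geo_zero, G.geo_natCast_div _ _ hn.ne', G.geo_natCast_div _ _ hm.ne']
  calc 2 * quasiInner a b c d
      = ∑ i ∈ Finset.range n, ∑ j ∈ Finset.range m,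
          2 * quasiInner (p i) (p (i + 1)) (q j) (q (j + 1)) := by
        simp only [hsplit, Finset.mul_sum]
    _ ≤ ∑ i ∈ Finset.range n, ∑ j ∈ Finset.range m,
          ((dist a b / n) ^ 2 + (dist c d / m) ^ 2) :=
        Finset.sum_le_sum fun i hi => Finset.sum_le_sum fun j hj => hcell i hi j hj
    _ = m / n * dist a b ^ 2 + n / m * dist c d ^ 2 := by
        simp only [Finset.sum_const, Finset.card_range, nsmul_eq_mul]
        field_simp

/-- The quadruple inequality: Cauchy–Schwarz for the quasilinearization. -/
lemma quasiInner_le (G : Hadamard H) (a b c d : H) :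
    quasiInner a b c d ≤ dist a b * dist c d := by
  rcases eq_or_ne a b with rfl | hab
  · simp [quasiInner_self_left]
  rcases eq_or_ne c d with rfl | hcd
  · simp [quasiInner_self_right]
  have := le_two_mul_mul_of_forall_nat_div (dist_pos.2 hab) (dist_pos.2 hcd)
    fun n m hn hm => G.two_mul_quasiInner_le_of_subdivision a b c d hn hm
  linarith

variable {ι : Type*} [Fintype ι] {w : ι → ℝ}

lemma frechetFun_geo_le (G : Hadamard H) (hw : ∀ i, 0 ≤ w i) (hsum : ∑ i, w i = 1)
    (a : ι → H) (x y : H) {t : ℝ} (ht : t ∈ Set.Icc (0 : ℝ) 1) :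
    frechetFun w a (G.geo x y t)
      ≤ (1 - t) * frechetFun w a x + t * frechetFun w a y - t * (1 - t) * dist x y ^ 2 := by
  have hterm : ∀ i, w i * dist (G.geo x y t) (a i) ^ 2
      ≤ w i * ((1 - t) * dist x (a i) ^ 2 + t * dist y (a i) ^ 2
          - t * (1 - t) * dist x y ^ 2) := by
    intro i
    have hcat := G.cat0 (a i) x y t ht
    rw [dist_comm (a i), dist_comm (a i), dist_comm (a i)] at hcat
    exact mul_le_mul_of_nonneg_left hcat (hw i)
  calc frechetFun w a (G.geo x y t)
      ≤ ∑ i, w i * ((1 - t) * dist x (a i) ^ 2 + t * dist y (a i) ^ 2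
          - t * (1 - t) * dist x y ^ 2) := Finset.sum_le_sum fun i _ => hterm i
    _ = (1 - t) * frechetFun w a x + t * frechetFun w a y
          - t * (1 - t) * dist x y ^ 2 * ∑ i, w i := by
        simp only [frechetFun, Finset.mul_sum, ← Finset.sum_add_distrib, ← Finset.sum_sub_distrib]
        exact Finset.sum_congr rfl fun i _ => by ring
    _ = _ := by rw [hsum, mul_one]

/-- The variance inequality. -/
lemma frechetFun_add_dist_sq_le (G : Hadamard H) (hw : ∀ i, 0 ≤ w i) (hsum : ∑ i, w i = 1)
    {a : ι → H} {ξ : H} (hξ : ∀ x, frechetFun w a ξ ≤ frechetFun w a x) (x : H) :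
    frechetFun w a ξ + dist ξ x ^ 2 ≤ frechetFun w a x := by
  have hsmall : ∀ t ∈ Set.Ioc (0 : ℝ) 1,
      frechetFun w a ξ + (1 - t) * dist ξ x ^ 2 ≤ frechetFun w a x := by
    rintro t ⟨ht0, ht1⟩
    have hconv := G.frechetFun_geo_le hw hsum a ξ x ⟨ht0.le, ht1⟩
    have := hξ (G.geo ξ x t)
    nlinarith
  have hlim : Tendsto (fun t : ℝ => frechetFun w a ξ + (1 - t) * dist ξ x ^ 2) (𝓝[>] 0)
      (𝓝 (frechetFun w a ξ + dist ξ x ^ 2)) := by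
    refine tendsto_nhdsWithin_of_tendsto_nhds (Continuous.tendsto' (by fun_prop) 0 _ ?_)
    simp
  exact le_of_tendsto hlim (eventually_of_mem (Ioc_mem_nhdsGT one_pos) hsmall)

lemma frechetFun_sub_le (G : Hadamard H) (hw : ∀ i, 0 ≤ w i) (a a' : ι → H) (x y : H) :
    frechetFun w a y - frechetFun w a x + (frechetFun w a' x - frechetFun w a' y)
      ≤ 2 * dist x y * ∑ i, w i * dist (a i) (a' i) := by
  simp only [frechetFun, ← Finset.sum_sub_distrib, ← Finset.sum_add_distrib, Finset.mul_sum]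
  refine Finset.sum_le_sum fun i _ => ?_
  have h := mul_le_mul_of_nonneg_left (G.quasiInner_le x y (a i) (a' i)) (hw i)
  unfold quasiInner at h
  linear_combination 2 * h

end Hadamard

theorem frechet_mean_lipschitz_general
    {H : Type*} [MetricSpace H] (G : Hadamard H)
    (N : ℕ) (w : Fin N → ℝ) (hw : ∀ n, 0 < w n) (hsum : ∑ n, w n = 1)
    (a a' : Fin N → H) (Ξ Ξ' : H)
    (hΞ : ∀ x : H, ∑ n, w n * dist Ξ (a n) ^ 2 ≤ ∑ n, w n * dist x (a n) ^ 2)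
    (hΞ' : ∀ x : H, ∑ n, w n * dist Ξ' (a' n) ^ 2 ≤ ∑ n, w n * dist x (a' n) ^ 2) :
    dist Ξ Ξ' ≤ ∑ n, w n * dist (a n) (a' n) := by
  have hw' : ∀ n, 0 ≤ w n := fun n => (hw n).le
  have hvar := G.frechetFun_add_dist_sq_le hw' hsum hΞ Ξ'
  have hvar' := G.frechetFun_add_dist_sq_le hw' hsum hΞ' Ξ
  have hquad := G.frechetFun_sub_le hw' a a' Ξ Ξ'
  set S := ∑ n, w n * dist (a n) (a' n)
  have hS : 0 ≤ S := Finset.sum_nonneg fun n _ => mul_nonneg (hw' n) dist_nonneg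
  rw [dist_comm Ξ' Ξ] at hvar'
  have hsq : dist Ξ Ξ' ^ 2 ≤ dist Ξ Ξ' * S := by linarith
  nlinarith [dist_nonneg (x := Ξ) (y := Ξ')]

/-- Lipschitz dependence of the Fréchet mean on its arguments. -/
theorem frechet_mean_lipschitz
    {H : Type*} [MetricSpace H] [CompleteSpace H] (G : Hadamard H)
    (N : ℕ) (w : Fin N → ℝ) (hw : ∀ n, 0 < w n) (hsum : ∑ n, w n = 1)
    (a a' : Fin N → H) (Ξ Ξ' : H)
    (hΞ : ∀ x : H, ∑ n, w n * dist Ξ (a n) ^ 2 ≤ ∑ n, w n * dist x (a n) ^ 2)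
    (hΞ' : ∀ x : H, ∑ n, w n * dist Ξ' (a' n) ^ 2 ≤ ∑ n, w n * dist x (a' n) ^ 2) :
    dist Ξ Ξ' ≤ ∑ n, w n * dist (a n) (a' n) :=
  frechet_mean_lipschitz_general G N w hw hsum a a' Ξ Ξ' hΞ hΞ'
end

section
/- Supermartingale convergence theorem: let (Ω,F,(F_k)_{k∈ℕ₀},μ) be a filtered probability space and let (Y_k), (Z_k), (W_k) be sequences of nonnegative integrable real-valued random variables on Ω such that Y_k, Z_k, W_k are F_k-measurable for each k ∈ ℕ₀, E(Y_{k+1} | F_k) ≤ Y_k − Z_k + W_k almost surely for each k ∈ ℕ₀, and Σ_k W_k < ∞ almost surely. Then (Y_k) converges almost surely to a finite nonnegative random variable, and Σ_k Z_k < ∞ almost surely. -/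
/-!
`M k = Y k + ∑_{j<k} (Z j - W j)` is a supermartingale bounded below by `-∑_{j<k} W j`.
Stopping it once the partial sums of `W` exceed a level `a` gives a supermartingale bounded
below by `-a`, hence bounded in `L¹` and a.s. convergent. As `∑ W < ∞` a.s., almost every `ω`
stays below some level, so `M` converges a.s. Then `Y k + ∑_{j<k} Z j = M k + ∑_{j<k} W j`
converges, which forces `∑ Z < ∞` and the convergence of `Y`.
-/

open Filter Topology MeasureTheory Finset

lemma exists_sum_range_ite_mul_sub_eq {R : Type*} [CommRing R] {P : ℕ → Prop} [DecidablePred P]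
    (hP : Antitone P) (m : ℕ → R) (n : ℕ) :
    ∃ n' ≤ n, (∀ j < n', P j) ∧ (n' < n → ¬P n') ∧
      ∑ j ∈ range n, (if P j then (1 : R) else 0) * (m (j + 1) - m j) = m n' - m 0 := by
  induction n with
  | zero => exact ⟨0, le_rfl, by simp, by simp, by simp⟩
  | succ n ih =>
    obtain ⟨n', hn'n, hPlt, hstop, hsum⟩ := ih
    rw [sum_range_succ, hsum]
    by_cases hPn : P n
    · have hn' : n' = n := by
        by_contra hne
        exact hstop (lt_of_le_of_ne hn'n hne) (hP hn'n hPn)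
      subst hn'
      refine ⟨n' + 1, le_rfl, fun j hj => ?_, by omega, by rw [if_pos hPn]; ring⟩
      rcases Nat.lt_succ_iff_lt_or_eq.1 hj with hj | rfl
      exacts [hPlt j hj, hPn]
    · refine ⟨n', by omega, hPlt, fun _ => ?_, by rw [if_neg hPn]; ring⟩
      rcases hn'n.lt_or_eq with hlt | rfl
      exacts [hstop hlt, hPn]

lemma summable_and_tendsto_of_tendsto_add_sum {y z : ℕ → ℝ} {L : ℝ} (hy : ∀ n, 0 ≤ y n)
    (hz : ∀ n, 0 ≤ z n) (h : Tendsto (fun n => y n + ∑ j ∈ range n, z j) atTop (𝓝 L)) :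
    Summable z ∧ Tendsto y atTop (𝓝 (L - ∑' j, z j)) := by
  obtain ⟨B, hB⟩ := h.bddAbove_range
  have hz_sum : Summable z := summable_of_sum_range_le hz fun n => by
    linarith [hy n, hB ⟨n, rfl⟩]
  refine ⟨hz_sum, ?_⟩
  convert h.sub hz_sum.hasSum.tendsto_sum_nat using 2 with n
  ring

namespace MeasureTheory

variable {Ω : Type*} {m0 : MeasurableSpace Ω} {μ : Measure Ω} {ℱ : Filtration ℕ m0}

theorem StronglyAdapted.stronglyMeasurable_sum_range {D : ℕ → Ω → ℝ} (hD : StronglyAdapted ℱ D)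
    {k n : ℕ} (hkn : k ≤ n + 1) : StronglyMeasurable[ℱ n] fun ω => ∑ j ∈ range k, D j ω :=
  Finset.stronglyMeasurable_fun_sum _ fun j hj =>
    (hD j).mono (ℱ.mono (by have := mem_range.1 hj; omega))

theorem Submartingale.exists_ae_tendsto_of_le [IsFiniteMeasure μ] {f : ℕ → Ω → ℝ} {X : Ω → ℝ}
    (hf : Submartingale f ℱ μ) (hX : Integrable X μ) (hfX : ∀ n, f n ≤ᵐ[μ] X) :
    ∀ᵐ ω ∂μ, ∃ c, Tendsto (fun n => f n ω) atTop (𝓝 c) := by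
  refine hf.exists_ae_tendsto_of_bdd
    (R := (2 * ∫ ω, |X ω| ∂μ - ∫ ω, f 0 ω ∂μ).toNNReal) fun n => ?_
  have hfn := hf.integrable n
  have hnorm_le : ∀ᵐ ω ∂μ, ‖f n ω‖ ≤ 2 * |X ω| - f n ω := by
    filter_upwards [hfX n] with ω h
    rw [Real.norm_eq_abs]
    cases abs_cases (f n ω) <;> cases abs_cases (X ω) <;> linarith
  have hmono : ∫ ω, f 0 ω ∂μ ≤ ∫ ω, f n ω ∂μ := by
    simpa using hf.setIntegral_le (Nat.zero_le n) MeasurableSet.univ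
  have hbound : ∫ ω, ‖f n ω‖ ∂μ ≤ 2 * ∫ ω, |X ω| ∂μ - ∫ ω, f 0 ω ∂μ :=
    calc ∫ ω, ‖f n ω‖ ∂μ ≤ ∫ ω, (2 * |X ω| - f n ω) ∂μ :=
          integral_mono_ae hfn.norm ((hX.abs.const_mul 2).sub hfn) hnorm_le
      _ = 2 * ∫ ω, |X ω| ∂μ - ∫ ω, f n ω ∂μ := by
          rw [integral_sub (hX.abs.const_mul 2) hfn, integral_const_mul]
      _ ≤ 2 * ∫ ω, |X ω| ∂μ - ∫ ω, f 0 ω ∂μ := by linarith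
  rw [eLpNorm_one_eq_lintegral_enorm, ← ofReal_integral_norm_eq_lintegral_enorm hfn]
  exact ENNReal.ofReal_le_ofReal hbound

theorem supermartingale_add_sum_of_condExp_le [IsFiniteMeasure μ] {Y D : ℕ → Ω → ℝ}
    (hY : StronglyAdapted ℱ Y) (hD : StronglyAdapted ℱ D) (hY_int : ∀ k, Integrable (Y k) μ)
    (hD_int : ∀ k, Integrable (D k) μ)
    (hYD : ∀ k, μ[Y (k + 1) | ℱ k] ≤ᵐ[μ] fun ω => Y k ω - D k ω) :
    Supermartingale (fun k ω => Y k ω + ∑ j ∈ range k, D j ω) ℱ μ := by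
  have hsum_int : ∀ k, Integrable (fun ω => ∑ j ∈ range k, D j ω) μ := fun k =>
    integrable_finsetSum _ fun j _ => hD_int j
  refine supermartingale_nat (fun k => (hY k).add (hD.stronglyMeasurable_sum_range k.le_succ))
    (fun k => (hY_int k).add (hsum_int k)) fun k => ?_
  have hcondExp : μ[fun ω => Y (k + 1) ω + ∑ j ∈ range (k + 1), D j ω | ℱ k]
      =ᵐ[μ] μ[Y (k + 1) | ℱ k] + fun ω => ∑ j ∈ range (k + 1), D j ω := by
    refine (condExp_add (hY_int _) (hsum_int _) _).trans ?_
    rw [condExp_of_stronglyMeasurable (ℱ.le k) (hD.stronglyMeasurable_sum_range le_rfl)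
      (hsum_int _)]
  filter_upwards [hcondExp, hYD k] with ω hω hYDω
  rw [hω, Pi.add_apply, sum_range_succ]
  linarith

theorem Supermartingale.ae_exists_tendsto_of_sum_le [IsFiniteMeasure μ] {M W : ℕ → Ω → ℝ}
    (hM : Supermartingale M ℱ μ) (hW : StronglyAdapted ℱ W) (hW_nonneg : ∀ k ω, 0 ≤ W k ω)
    (hMW : ∀ n ω, -∑ j ∈ range n, W j ω ≤ M n ω) (a : ℕ) :
    ∀ᵐ ω ∂μ, (∀ n, ∑ j ∈ range n, W j ω ≤ a) → ∃ c, Tendsto (fun n => M n ω) atTop (𝓝 c) := by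
  set P : ℕ → Ω → Prop := fun j ω => ∑ i ∈ range (j + 1), W i ω ≤ a
  have hP_anti : ∀ ω, Antitone fun j => P j ω := fun ω i j hij hj =>
    (sum_le_sum_of_subset_of_nonneg (range_subset_range.2 (by omega))
      fun k _ _ => hW_nonneg k ω).trans hj
  set ξ : ℕ → Ω → ℝ := fun j ω => if P j ω then 1 else 0 with hξdef
  have hξ : StronglyAdapted ℱ ξ := fun j =>
    StronglyMeasurable.ite
      (measurableSet_le (hW.stronglyMeasurable_sum_range le_rfl).measurable measurable_const)
      stronglyMeasurable_const stronglyMeasurable_const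
  set G : ℕ → Ω → ℝ := fun n => ∑ j ∈ range n, ξ j * ((-M) (j + 1) - (-M) j) with hGdef
  have hG : Submartingale G ℱ μ :=
    hM.neg.sum_mul_sub hξ (R := 1) (fun j ω => by simp only [hξdef]; split <;> norm_num)
      (fun j ω => by simp only [hξdef]; split <;> norm_num)
  have hG_apply : ∀ n ω, G n ω =
      ∑ j ∈ range n, (if P j ω then (1 : ℝ) else 0) * (-M (j + 1) ω - -M j ω) := by
    intro n ω
    simp only [hGdef, hξdef, Finset.sum_apply, Pi.mul_apply, Pi.sub_apply, Pi.neg_apply]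
  have hG_le : ∀ n, G n ≤ᵐ[μ] fun ω => M 0 ω + a := fun n => ae_of_all _ fun ω => by
    obtain ⟨n', -, hPlt, -, heq⟩ :=
      exists_sum_range_ite_mul_sub_eq (hP_anti ω) (fun k => -M k ω) n
    have hWn' : ∑ j ∈ range n', W j ω ≤ a := by
      rcases n' with _ | n'
      · simp
      · exact hPlt n' n'.lt_succ_self
    rw [hG_apply, heq]
    linarith [hMW n' ω]
  filter_upwards [hG.exists_ae_tendsto_of_le ((hM.integrable 0).add (integrable_const _)) hG_le]
    with ω ⟨c, hc⟩ hWa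
  have hG_eq : ∀ n, G n ω = M 0 ω - M n ω := by
    intro n
    obtain ⟨n', hn'n, -, hstop, heq⟩ :=
      exists_sum_range_ite_mul_sub_eq (hP_anti ω) (fun k => -M k ω) n
    have hn' : n' = n := by
      by_contra hne
      exact hstop (lt_of_le_of_ne hn'n hne) (hWa (n' + 1))
    rw [hG_apply, heq, hn']
    ring
  refine ⟨M 0 ω - c, ?_⟩
  convert tendsto_const_nhds.sub hc using 2 with n
  rw [hG_eq]
  ring

theorem Supermartingale.exists_ae_tendsto_of_neg_sum_le [IsFiniteMeasure μ] {M W : ℕ → Ω → ℝ}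
    (hM : Supermartingale M ℱ μ) (hW : StronglyAdapted ℱ W) (hW_nonneg : ∀ k ω, 0 ≤ W k ω)
    (hMW : ∀ n ω, -∑ j ∈ range n, W j ω ≤ M n ω) (hW_sum : ∀ᵐ ω ∂μ, Summable fun k => W k ω) :
    ∀ᵐ ω ∂μ, ∃ c, Tendsto (fun n => M n ω) atTop (𝓝 c) := by
  filter_upwards [ae_all_iff.2 (hM.ae_exists_tendsto_of_sum_le hW hW_nonneg hMW), hW_sum]
    with ω hconv hsum
  exact hconv ⌈∑' k, W k ω⌉₊ fun n =>
    (hsum.sum_le_tsum _ fun k _ => hW_nonneg k ω).trans (Nat.le_ceil _)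

end MeasureTheory

/-- Supermartingale convergence theorem (Robbins–Siegmund type): an almost
supermartingale with summable perturbations converges a.s. and the compensator
series converges a.s. -/
theorem supermartingale_convergence
    {Ω : Type*} {m0 : MeasurableSpace Ω} {μ : Measure Ω} [IsProbabilityMeasure μ]
    (ℱ : Filtration ℕ m0)
    (Y Z W : ℕ → Ω → ℝ)
    (hY_nonneg : ∀ k ω, 0 ≤ Y k ω)
    (hZ_nonneg : ∀ k ω, 0 ≤ Z k ω)
    (hW_nonneg : ∀ k ω, 0 ≤ W k ω)
    (hY_int : ∀ k, Integrable (Y k) μ)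
    (hZ_int : ∀ k, Integrable (Z k) μ)
    (hW_int : ∀ k, Integrable (W k) μ)
    (hY_meas : ∀ k, StronglyMeasurable[ℱ k] (Y k))
    (hZ_meas : ∀ k, StronglyMeasurable[ℱ k] (Z k))
    (hW_meas : ∀ k, StronglyMeasurable[ℱ k] (W k))
    (hsuper : ∀ k, μ[Y (k + 1) | ℱ k] ≤ᵐ[μ] fun ω => Y k ω - Z k ω + W k ω)
    (hW_sum : ∀ᵐ ω ∂μ, Summable fun k => W k ω) :
    ∀ᵐ ω ∂μ,
      (∃ l : ℝ, 0 ≤ l ∧ Tendsto (fun k => Y k ω) atTop (𝓝 l)) ∧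
        Summable fun k => Z k ω := by
  have hM : Supermartingale (fun k ω => Y k ω + ∑ j ∈ range k, (Z j ω - W j ω)) ℱ μ :=
    supermartingale_add_sum_of_condExp_le hY_meas (fun k => (hZ_meas k).sub (hW_meas k)) hY_int
      (fun k => (hZ_int k).sub (hW_int k))
      fun k => (hsuper k).mono fun ω h => h.trans_eq (by ring)
  have hMW : ∀ n ω, -∑ j ∈ range n, W j ω ≤ Y n ω + ∑ j ∈ range n, (Z j ω - W j ω) :=
    fun n ω => by
      rw [sum_sub_distrib]
      linarith [hY_nonneg n ω, sum_nonneg fun j (_ : j ∈ range n) => hZ_nonneg j ω]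
  filter_upwards [hM.exists_ae_tendsto_of_neg_sum_le hW_meas hW_nonneg hMW hW_sum, hW_sum]
    with ω ⟨c, hc⟩ hWω
  have hYZ : Tendsto (fun n => Y n ω + ∑ j ∈ range n, Z j ω) atTop (𝓝 (c + ∑' j, W j ω)) := by
    convert hc.add hWω.hasSum.tendsto_sum_nat using 2 with n
    rw [sum_sub_distrib]
    ring
  obtain ⟨hZ, hY⟩ :=
    summable_and_tendsto_of_tendsto_add_sum (hY_nonneg · ω) (hZ_nonneg · ω) hYZ
  exact ⟨⟨_, ge_of_tendsto' hY (hY_nonneg · ω), hY⟩, hZ⟩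
end

section
/- Convergence of the proximal point algorithm: let (H,d) be a locally compact Hadamard space and f : H → (−∞,∞] a proper convex lower semicontinuous function attaining its minimum on H. Let x₀ ∈ H, let (λ_k)_{k∈ℕ₀} be positive reals with Σ_{k=0}^∞ λ_k = ∞, and for each k ∈ ℕ suppose x_k is a minimizer of the function y ↦ f(y) + (1/(2λ_{k−1}))·d(y,x_{k−1})². Then the sequence (x_k) converges to a minimizer of f. -/
open Filter Topology

/-!
The proximal point `p` of `x` satisfies, for every `y` with `f y` finite, the variational
inequality `2λ (f p - f y) + d(p,x)² + d(p,y)² ≤ d(y,x)²`: compare `p` with the points of the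
geodesic from `p` to `y` and apply the CAT(0) inequality. Taking `y` a minimizer shows that the
iterates are Fejér monotone with respect to the minimizers, and telescoping gives
`f(xₙ) - min f ≤ d(x₀,z)² / (2 ∑_{k<n} λₖ) → 0`. The iterates thus stay in a closed ball, which
is compact by the Hopf–Rinow argument, so a subsequence converges; by lower semicontinuity its
limit `w` is a minimizer, and Fejér monotonicity with respect to `w` upgrades the convergence of
the subsequence to that of the whole sequence.
-/

open Metric

theorem totallyBounded_of_forall_subset_thickening {X : Type*} [PseudoMetricSpace X] {s : Set X}
    (h : ∀ ε > 0, ∃ t, TotallyBounded t ∧ s ⊆ thickening ε t) : TotallyBounded s := by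
  rw [Metric.totallyBounded_iff]
  intro ε hε
  obtain ⟨t, ht, hst⟩ := h (ε / 2) (half_pos hε)
  obtain ⟨F, hF, htF⟩ := Metric.totallyBounded_iff.1 ht (ε / 2) (half_pos hε)
  refine ⟨F, hF, fun a ha => ?_⟩
  obtain ⟨b, hb, hab⟩ := mem_thickening_iff.1 (hst ha)
  obtain ⟨c, hc, hbc⟩ := Set.mem_iUnion₂.1 (htF hb)
  refine Set.mem_iUnion₂.2 ⟨c, hc, mem_ball.2 ?_⟩
  linarith [dist_triangle a b c, mem_ball.1 hbc]

theorem LowerSemicontinuous.le_of_tendsto_subseq {X γ : Type*} [TopologicalSpace X]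
    [LinearOrder γ] {f : X → γ} (hf : LowerSemicontinuous f) {u : ℕ → X}
    (hu : Antitone (f ∘ u)) {φ : ℕ → ℕ} (hφ : StrictMono φ) {w : X}
    (hw : Tendsto (u ∘ φ) atTop (𝓝 w)) (n : ℕ) : f w ≤ f (u n) :=
  (hf.isClosed_preimage (f (u n))).mem_of_tendsto hw <|
    (eventually_ge_atTop n).mono fun k hk => hu (hk.trans (hφ.id_le k))

theorem tendsto_of_antitone_dist_of_tendsto_subseq {X : Type*} [PseudoMetricSpace X]
    {u : ℕ → X} {w : X} (hu : Antitone fun n => dist (u n) w) {φ : ℕ → ℕ}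
    (hφ : StrictMono φ) (hw : Tendsto (u ∘ φ) atTop (𝓝 w)) : Tendsto u atTop (𝓝 w) := by
  rw [tendsto_iff_dist_tendsto_zero] at hw ⊢
  have hinf := tendsto_atTop_ciInf hu ⟨0, Set.forall_mem_range.2 fun n => dist_nonneg⟩
  rwa [tendsto_nhds_unique (hinf.comp hφ.tendsto_atTop) hw] at hinf

namespace Hadamard

variable {H : Type*} [MetricSpace H]

theorem dist_geo_left (G : Hadamard H) {x y : H} {t : ℝ} (ht : t ∈ Set.Icc (0 : ℝ) 1) :
    dist x (G.geo x y t) = t * dist x y := by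
  have h := G.geo_dist x y 0 ⟨le_rfl, zero_le_one⟩ t ht
  rwa [G.geo_zero, zero_sub, abs_neg, abs_of_nonneg ht.1] at h

theorem dist_geo_right (G : Hadamard H) {x y : H} {t : ℝ} (ht : t ∈ Set.Icc (0 : ℝ) 1) :
    dist (G.geo x y t) y = (1 - t) * dist x y := by
  have h := G.geo_dist x y t ht 1 ⟨zero_le_one, le_rfl⟩
  rwa [G.geo_one, abs_of_nonpos (by linarith [ht.2]), neg_sub] at h

theorem closedBall_add_subset_cthickening (G : Hadamard H) (z : H) {r : ℝ} (hr : 0 ≤ r)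
    (δ : ℝ) : closedBall z (r + δ) ⊆ cthickening δ (closedBall z r) := by
  intro w hw
  rw [mem_closedBall'] at hw
  rcases le_or_gt (dist z w) r with h | h
  · exact self_subset_cthickening _ (mem_closedBall'.2 h)
  · have hd : 0 < dist z w := hr.trans_lt h
    have ht : r / dist z w ∈ Set.Icc (0 : ℝ) 1 :=
      ⟨div_nonneg hr hd.le, (div_le_one hd).2 h.le⟩
    refine mem_cthickening_of_dist_le w (G.geo z w (r / dist z w)) δ _ ?_ ?_
    · rw [mem_closedBall', G.dist_geo_left ht, div_mul_cancel₀ _ hd.ne']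
    · rw [dist_comm, G.dist_geo_right ht, sub_mul, one_mul, div_mul_cancel₀ _ hd.ne']
      linarith

theorem isCompact_closedBall_of_forall_lt [CompleteSpace H] (G : Hadamard H) (z : H) {R : ℝ}
    (h : ∀ s < R, IsCompact (closedBall z s)) : IsCompact (closedBall z R) := by
  refine (totallyBounded_of_forall_subset_thickening fun ε hε => ?_).isCompact_of_isClosed
    isClosed_closedBall
  rcases le_or_gt R (ε / 2) with hR | hR
  · refine ⟨{z}, (Set.finite_singleton z).totallyBounded, fun w hw => ?_⟩
    exact mem_thickening_iff.2 ⟨z, rfl, by linarith [mem_closedBall.1 hw]⟩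
  · refine ⟨closedBall z (R - ε / 2), (h _ (by linarith)).totallyBounded, ?_⟩
    calc closedBall z R = closedBall z (R - ε / 2 + ε / 2) := by rw [sub_add_cancel]
      _ ⊆ cthickening (ε / 2) (closedBall z (R - ε / 2)) :=
        G.closedBall_add_subset_cthickening z (by linarith) _
      _ ⊆ thickening ε (closedBall z (R - ε / 2)) :=
        cthickening_subset_thickening' hε (half_lt_self hε) _

/-- Hopf–Rinow: the infimum of the radii of non-compact balls would itself be the radius of a
compact ball, which local compactness then thickens to a larger compact ball. -/
theorem isCompact_closedBall [CompleteSpace H] [LocallyCompactSpace H] (G : Hadamard H)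
    (z : H) (r : ℝ) : IsCompact (closedBall z r) := by
  by_contra hr
  set B := {s : ℝ | ¬ IsCompact (closedBall z s)}
  have hB : ∀ s ∈ B, 0 ≤ s := fun s hs => not_lt.1 fun h => hs <| by
    rw [closedBall_eq_empty.2 h]; exact isCompact_empty
  have hR : IsCompact (closedBall z (sInf B)) := G.isCompact_closedBall_of_forall_lt z
    fun s hs => not_not.1 fun h => (csInf_le ⟨0, hB⟩ h).not_gt hs
  obtain ⟨δ, hδ, hδc⟩ := hR.exists_isCompact_cthickening
  have : sInf B + δ ≤ sInf B := le_csInf ⟨r, hr⟩ fun s hs => not_lt.1 fun hsδ => hs <|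
    hδc.of_isClosed_subset isClosed_closedBall <| (closedBall_subset_closedBall hsδ.le).trans
      (G.closedBall_add_subset_cthickening z (le_csInf ⟨r, hr⟩ hB) δ)
  linarith

end Hadamard

section Proximal

variable {H : Type*} [MetricSpace H] {G : Hadamard H} {f : H → EReal}

theorem GeoConvex.apply_geo_le (hconv : GeoConvex G f) (hf : ∀ x, f x ≠ ⊥) {x y : H}
    (hx : f x ≠ ⊤) (hy : f y ≠ ⊤) {t : ℝ} (ht : t ∈ Set.Icc (0 : ℝ) 1) :
    f (G.geo x y t) ≤ (((1 - t) * (f x).toReal + t * (f y).toReal : ℝ) : EReal) := by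
  have h := hconv x y t ht
  rwa [← EReal.coe_toReal hx (hf x), ← EReal.coe_toReal hy (hf y), ← EReal.coe_mul,
    ← EReal.coe_mul, ← EReal.coe_add] at h

def IsProxPoint (f : H → EReal) (lam : ℝ) (x p : H) : Prop :=
  ∀ y, f p + ((1 / (2 * lam) * dist p x ^ 2 : ℝ) : EReal)
    ≤ f y + ((1 / (2 * lam) * dist y x ^ 2 : ℝ) : EReal)

namespace IsProxPoint

variable {lam : ℝ} {x p : H}

theorem apply_le (h : IsProxPoint f lam x p) (hlam : 0 ≤ lam) : f p ≤ f x := by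
  have hx := h x
  rw [dist_self, zero_pow two_ne_zero, mul_zero, EReal.coe_zero, add_zero] at hx
  exact le_trans (le_add_of_nonneg_right (EReal.coe_nonneg.2 (by positivity))) hx

theorem ne_top (h : IsProxPoint f lam x p) {y : H} (hy : f y ≠ ⊤) : f p ≠ ⊤ := by
  intro hp
  have hy' := h y
  rw [hp, EReal.top_add_coe, top_le_iff] at hy'
  exact EReal.add_ne_top hy (EReal.coe_ne_top _) hy'

theorem toReal_le (h : IsProxPoint f lam x p) (hlam : 0 < lam) (hf : ∀ x, f x ≠ ⊥)
    (hp : f p ≠ ⊤) {y : H} (hy : f y ≠ ⊤) :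
    2 * lam * (f p).toReal + dist p x ^ 2 ≤ 2 * lam * (f y).toReal + dist y x ^ 2 := by
  have hpy := h y
  rw [← EReal.coe_toReal hp (hf p), ← EReal.coe_toReal hy (hf y), ← EReal.coe_add,
    ← EReal.coe_add, EReal.coe_le_coe_iff] at hpy
  have hmul := mul_le_mul_of_nonneg_left hpy (by positivity : (0 : ℝ) ≤ 2 * lam)
  field_simp at hmul
  linarith

/-- The proximal point `p` compares favourably with every point `q` of the geodesic from `p`
to `y`; the CAT(0) inequality for `d(x, q)` then leaves a multiple of `t` which is divided out
before letting `t → 0`. -/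
theorem variational_ineq (h : IsProxPoint f lam x p) (hlam : 0 < lam) (hf : ∀ x, f x ≠ ⊥)
    (hconv : GeoConvex G f) {y : H} (hy : f y ≠ ⊤) :
    2 * lam * ((f p).toReal - (f y).toReal) + dist p x ^ 2 + dist p y ^ 2 ≤ dist y x ^ 2 := by
  have hp : f p ≠ ⊤ := h.ne_top hy
  set c := 2 * lam * ((f p).toReal - (f y).toReal) + dist p x ^ 2
  have hstep : ∀ t ∈ Set.Ioc (0 : ℝ) 1, c + (1 - t) * dist p y ^ 2 ≤ dist y x ^ 2 := by
    intro t ht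
    have ht' : t ∈ Set.Icc (0 : ℝ) 1 := Set.Ioc_subset_Icc_self ht
    have hq := hconv.apply_geo_le hf hp hy ht'
    have hq_top : f (G.geo p y t) ≠ ⊤ := ne_top_of_le_ne_top (EReal.coe_ne_top _) hq
    have hq_le := EReal.toReal_le_toReal hq (hf _) (EReal.coe_ne_top _)
    rw [EReal.toReal_coe] at hq_le
    have hmin := h.toReal_le hlam hf hp hq_top
    have hcat := G.cat0 x p y t ht'
    rw [dist_comm x, dist_comm x p, dist_comm x y] at hcat
    have hmul := mul_le_mul_of_nonneg_left hq_le (by positivity : (0 : ℝ) ≤ 2 * lam)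
    have : t * (c + (1 - t) * dist p y ^ 2) ≤ t * dist y x ^ 2 := by
      simp only [c]; nlinarith
    exact le_of_mul_le_mul_left this ht.1
  have hlim : Tendsto (fun t => c + (1 - t) * dist p y ^ 2) (𝓝[>] 0)
      (𝓝 (c + dist p y ^ 2)) := by
    have hcont : Continuous fun t : ℝ => c + (1 - t) * dist p y ^ 2 := by fun_prop
    simpa using (hcont.tendsto 0).mono_left nhdsWithin_le_nhds
  exact le_of_tendsto hlim (eventually_of_mem (Ioc_mem_nhdsGT zero_lt_one) hstep)

theorem dist_le_of_le (h : IsProxPoint f lam x p) (hlam : 0 < lam) (hf : ∀ x, f x ≠ ⊥)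
    (hconv : GeoConvex G f) {w : H} (hw : f w ≤ f p) (hw_top : f w ≠ ⊤) :
    dist p w ≤ dist x w := by
  have hvar := h.variational_ineq hlam hf hconv hw_top
  have hfw := EReal.toReal_le_toReal hw (hf w) (h.ne_top hw_top)
  rw [dist_comm w] at hvar
  have : dist p w ^ 2 ≤ dist x w ^ 2 := by nlinarith [sq_nonneg (dist p x)]
  exact (pow_le_pow_iff_left₀ dist_nonneg dist_nonneg two_ne_zero).1 this

end IsProxPoint

end Proximal

section ProximalSequence

variable {H : Type*} [MetricSpace H] {G : Hadamard H} {f : H → EReal} {lam : ℕ → ℝ}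
  {x : ℕ → H}

theorem antitone_of_isProxPoint (hlam : ∀ k, 0 ≤ lam k)
    (hx : ∀ k, IsProxPoint f (lam k) (x k) (x (k + 1))) : Antitone (f ∘ x) :=
  antitone_nat_of_succ_le fun k => (hx k).apply_le (hlam k)

theorem antitone_dist_of_isProxPoint (hf : ∀ x, f x ≠ ⊥) (hconv : GeoConvex G f)
    (hlam : ∀ k, 0 < lam k) (hx : ∀ k, IsProxPoint f (lam k) (x k) (x (k + 1))) {w : H}
    (hw : ∀ y, f w ≤ f y) (hw_top : f w ≠ ⊤) : Antitone fun n => dist (x n) w :=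
  antitone_nat_of_succ_le fun k => (hx k).dist_le_of_le (hlam k) hf hconv (hw _) hw_top

/-- Telescoping the variational inequality at `z` bounds the weighted gaps
`f (x (k + 1)) - f z`, each of which dominates the last one. -/
theorem sub_mul_sum_le_of_isProxPoint (hf : ∀ x, f x ≠ ⊥) (hconv : GeoConvex G f)
    (hlam : ∀ k, 0 < lam k) (hx : ∀ k, IsProxPoint f (lam k) (x k) (x (k + 1))) {z : H}
    (hz : f z ≠ ⊤) (n : ℕ) :
    ((f (x n)).toReal - (f z).toReal) * ∑ k ∈ Finset.range n, 2 * lam k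
      ≤ dist (x 0) z ^ 2 := by
  have htele : ∀ m, ∑ k ∈ Finset.range m, 2 * lam k * ((f (x (k + 1))).toReal - (f z).toReal)
      ≤ dist (x 0) z ^ 2 - dist (x m) z ^ 2 := by
    intro m
    induction m with
    | zero => simp
    | succ m ih =>
      have hvar := (hx m).variational_ineq (hlam m) hf hconv hz
      rw [dist_comm z] at hvar
      rw [Finset.sum_range_succ]
      nlinarith [sq_nonneg (dist (x (m + 1)) (x m))]
  have hgap : ∀ k ∈ Finset.range n, ((f (x n)).toReal - (f z).toReal) * (2 * lam k)
      ≤ 2 * lam k * ((f (x (k + 1))).toReal - (f z).toReal) := by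
    intro k hk
    have hmono : (f (x n)).toReal ≤ (f (x (k + 1))).toReal := EReal.toReal_le_toReal
      (antitone_of_isProxPoint (fun k => (hlam k).le) hx (Finset.mem_range.1 hk))
      (hf _) ((hx k).ne_top hz)
    nlinarith [hlam k]
  calc _ = ∑ k ∈ Finset.range n, ((f (x n)).toReal - (f z).toReal) * (2 * lam k) :=
        Finset.mul_sum _ _ _
    _ ≤ _ := Finset.sum_le_sum hgap
    _ ≤ _ := htele n
    _ ≤ _ := sub_le_self _ (sq_nonneg _)

theorem iInf_le_of_isProxPoint (hf : ∀ x, f x ≠ ⊥) (hconv : GeoConvex G f)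
    (hlam : ∀ k, 0 < lam k) (hlam_div : ¬ Summable lam)
    (hx : ∀ k, IsProxPoint f (lam k) (x k) (x (k + 1))) {z : H} (hz : f z ≠ ⊤) :
    ⨅ n, f (x n) ≤ f z := by
  refine le_of_forall_gt_imp_ge_of_dense fun a ha => ?_
  induction a using EReal.rec with
  | bot => exact absurd ha not_lt_bot
  | top => exact le_top
  | coe r =>
    rw [← EReal.coe_toReal hz (hf z), EReal.coe_lt_coe_iff] at ha
    have hsum : Tendsto (fun n => ∑ k ∈ Finset.range n, 2 * lam k) atTop atTop := by
      simp_rw [← Finset.mul_sum]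
      exact ((not_summable_iff_tendsto_nat_atTop_of_nonneg fun k => (hlam k).le).1
        hlam_div).const_mul_atTop two_pos
    obtain ⟨n, hn, hn1⟩ :=
      ((hsum.eventually_gt_atTop (dist (x 0) z ^ 2 / (r - (f z).toReal))).and
        (eventually_ge_atTop 1)).exists
    have hrate := sub_mul_sum_le_of_isProxPoint hf hconv hlam hx hz n
    rw [div_lt_iff₀ (sub_pos.2 ha)] at hn
    have hxn : f (x n) ≠ ⊤ := by
      obtain ⟨m, rfl⟩ := Nat.exists_eq_add_of_le' hn1
      exact (hx m).ne_top hz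
    refine (iInf_le _ n).trans ?_
    rw [← EReal.coe_toReal hxn (hf _), EReal.coe_le_coe_iff]
    nlinarith

end ProximalSequence

/-- Convergence of the proximal point algorithm in a locally compact Hadamard space:
if `f` is proper convex lsc and attains its minimum, `(λ_k)` are positive with
`∑ λ_k = ∞`, and `x (k+1)` minimizes `y ↦ f y + (1/(2λ_k)) d(y, x k)²`, then
`(x k)` converges to a minimizer of `f`. -/
theorem proximal_point_algorithm_converges
    {H : Type*} [MetricSpace H] [CompleteSpace H] [LocallyCompactSpace H]
    (G : Hadamard H)
    (f : H → EReal) (hf_ne_bot : ∀ x : H, f x ≠ ⊥)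
    (hproper : ∃ x : H, f x ≠ ⊤)
    (hconv : GeoConvex G f) (hlsc : LowerSemicontinuous f)
    (hmin : ∃ z : H, ∀ x : H, f z ≤ f x)
    (lam : ℕ → ℝ) (hlam_pos : ∀ k, 0 < lam k) (hlam_div : ¬ Summable lam)
    (x : ℕ → H)
    (hx : ∀ k : ℕ, ∀ y : H,
      f (x (k + 1)) + ((1 / (2 * lam k) * dist (x (k + 1)) (x k) ^ 2 : ℝ) : EReal)
        ≤ f y + ((1 / (2 * lam k) * dist y (x k) ^ 2 : ℝ) : EReal)) :
    ∃ z : H, (∀ y : H, f z ≤ f y) ∧ Tendsto x atTop (𝓝 z) := by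
  obtain ⟨z, hz⟩ := hmin
  obtain ⟨x₀, hx₀⟩ := hproper
  have hz_top : f z ≠ ⊤ := ne_top_of_le_ne_top hx₀ (hz x₀)
  have hfejer : ∀ w, (∀ y, f w ≤ f y) → f w ≠ ⊤ → Antitone fun n => dist (x n) w :=
    fun w hw hw_top => antitone_dist_of_isProxPoint hf_ne_bot hconv hlam_pos hx hw hw_top
  obtain ⟨w, -, φ, hφ, hφw⟩ := (G.isCompact_closedBall z (dist (x 0) z)).tendsto_subseq
    fun n => mem_closedBall.2 (hfejer z hz hz_top (Nat.zero_le n))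
  have hwz : f w ≤ f z :=
    (le_iInf (hlsc.le_of_tendsto_subseq
      (antitone_of_isProxPoint (fun k => (hlam_pos k).le) hx) hφ hφw)).trans
    (iInf_le_of_isProxPoint hf_ne_bot hconv hlam_pos hlam_div hx hz_top)
  have hw : ∀ y, f w ≤ f y := fun y => hwz.trans (hz y)
  exact ⟨w, hw, tendsto_of_antitone_dist_of_tendsto_subseq
    (hfejer w hw (ne_top_of_le_ne_top hz_top hwz)) hφ hφw⟩
end

section
/- Resolvent estimate: let (H,d) be a Hadamard space, h : H → (−∞,∞] a proper convex lower semicontinuous function, λ > 0, x ∈ H, and suppose p ∈ H is a minimizer of the function z ↦ h(z) + (1/(2λ))·d(x,z)². Then for every y ∈ H, h(p) − h(y) ≤ (1/(2λ))·d(x,y)² − (1/(2λ))·d(x,p)² − (1/(2λ))·d(p,y)². -/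
open Filter Topology

open Set

/-! Test the minimality of `p` against the point `(1-t)p ⊕ ty` of the geodesic to `y`.
Convexity of `h` and the CAT(0) inequality for `d(x,·)²` bound the competitor's value; what
remains is `t D ≤ t² d(p,y)²/(2λ)`, where `D` is the defect of the claimed inequality. Dividing
by `t` and letting `t → 0` gives `D ≤ 0`. Infinite values of `h p` or `h y` are excluded by (or
trivialise) the minimality of `p` tested at `y`. -/

theorem nonpos_of_forall_le_mul {D K : ℝ} (h : ∀ t ∈ Ioc (0 : ℝ) 1, D ≤ t * K) :
    D ≤ 0 := by
  have hlim : Tendsto (fun t : ℝ => t * K) (𝓝[>] 0) (𝓝 0) :=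
    ((continuous_mul_const K).tendsto' 0 0 (zero_mul K)).mono_left nhdsWithin_le_nhds
  exact ge_of_tendsto hlim (Filter.mem_of_superset (Ioc_mem_nhdsGT zero_lt_one) h)

theorem EReal.ne_top_and_ne_bot_of_add_coe_le_add_coe {a b : EReal} {r s : ℝ}
    (h : a + r ≤ b + s) (ha : a ≠ ⊥) (hb : b ≠ ⊤) : a ≠ ⊤ ∧ b ≠ ⊥ := by
  constructor
  · rintro rfl
    rw [EReal.top_add_coe, top_le_iff] at h
    exact EReal.add_ne_top hb (EReal.coe_ne_top s) h
  · rintro rfl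
    rw [EReal.bot_add, le_bot_iff, EReal.add_eq_bot_iff] at h
    exact h.elim ha (EReal.coe_ne_bot r)

theorem GeoConvex.le_coe {H : Type*} [MetricSpace H] {G : Hadamard H} {h : H → EReal}
    (hconv : GeoConvex G h) {p y : H} {a b : ℝ} (ha : h p = a) (hb : h y = b)
    {t : ℝ} (ht : t ∈ Icc (0 : ℝ) 1) :
    h (G.geo p y t) ≤ (((1 - t) * a + t * b : ℝ) : EReal) := by
  simpa [ha, hb] using hconv p y t ht

theorem GeoConvex.sub_le_of_forall_add_sq_dist_le {H : Type*} [MetricSpace H] {G : Hadamard H}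
    {h : H → EReal} (hconv : GeoConvex G h) {c : ℝ} (hc : 0 ≤ c) {x p y : H}
    (hp : ∀ z, h p + ((c * dist x p ^ 2 : ℝ) : EReal)
      ≤ h z + ((c * dist x z ^ 2 : ℝ) : EReal))
    {a b : ℝ} (ha : h p = a) (hb : h y = b) :
    a - b ≤ c * dist x y ^ 2 - c * dist x p ^ 2 - c * dist p y ^ 2 := by
  rw [← sub_nonpos]
  refine nonpos_of_forall_le_mul (K := c * dist p y ^ 2) fun t ht => ?_
  have ht' : t ∈ Icc (0 : ℝ) 1 := Ioc_subset_Icc_self ht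
  have hmin : a + c * dist x p ^ 2
      ≤ (1 - t) * a + t * b + c * dist x (G.geo p y t) ^ 2 := by
    have := (hp (G.geo p y t)).trans (add_le_add_left (hconv.le_coe ha hb ht') _)
    rw [ha] at this
    exact_mod_cast this
  have hcat := mul_le_mul_of_nonneg_left (G.cat0 x p y t ht') hc
  refine le_of_mul_le_mul_left ?_ ht.1
  nlinarith

theorem resolvent_estimate_general
    {H : Type*} [MetricSpace H] (G : Hadamard H)
    (h : H → EReal)
    (hconv : GeoConvex G h)
    (lam : ℝ) (hlam : 0 < lam) (x p : H)
    (hp : ∀ z : H,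
      h p + ((1 / (2 * lam) * dist x p ^ 2 : ℝ) : EReal)
        ≤ h z + ((1 / (2 * lam) * dist x z ^ 2 : ℝ) : EReal)) :
    ∀ y : H,
      h p - h y
        ≤ ((1 / (2 * lam) * dist x y ^ 2 - 1 / (2 * lam) * dist x p ^ 2
            - 1 / (2 * lam) * dist p y ^ 2 : ℝ) : EReal) := by
  intro y
  by_cases hp_bot : h p = ⊥
  · simp [hp_bot]
  by_cases hy_top : h y = ⊤
  · simp [hy_top]
  obtain ⟨hp_top, hy_bot⟩ :=
    EReal.ne_top_and_ne_bot_of_add_coe_le_add_coe (hp y) hp_bot hy_top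
  have ha := (EReal.coe_toReal hp_top hp_bot).symm
  have hb := (EReal.coe_toReal hy_top hy_bot).symm
  rw [ha, hb, ← EReal.coe_sub]
  exact_mod_cast hconv.sub_le_of_forall_add_sq_dist_le (by positivity) hp ha hb

/-- Resolvent estimate: if `p` minimizes `z ↦ h z + (1/(2λ)) d(x,z)²` for a proper
convex lsc function `h` on a Hadamard space, then for every `y`,
`h p - h y ≤ (1/(2λ)) d(x,y)² - (1/(2λ)) d(x,p)² - (1/(2λ)) d(p,y)²`. -/
theorem resolvent_estimate
    {H : Type*} [MetricSpace H] [CompleteSpace H] (G : Hadamard H)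
    (h : H → EReal) (hh_ne_bot : ∀ x : H, h x ≠ ⊥)
    (hproper : ∃ x : H, h x ≠ ⊤)
    (hconv : GeoConvex G h) (hlsc : LowerSemicontinuous h)
    (lam : ℝ) (hlam : 0 < lam) (x p : H)
    (hp : ∀ z : H,
      h p + ((1 / (2 * lam) * dist x p ^ 2 : ℝ) : EReal)
        ≤ h z + ((1 / (2 * lam) * dist x z ^ 2 : ℝ) : EReal)) :
    ∀ y : H,
      h p - h y
        ≤ ((1 / (2 * lam) * dist x y ^ 2 - 1 / (2 * lam) * dist x p ^ 2
            - 1 / (2 * lam) * dist p y ^ 2 : ℝ) : EReal) :=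
  resolvent_estimate_general G h hconv lam hlam x p hp
end
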